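/- arXiv:2006.06843 — 9 statements merged into one kernel-verified Lean document; each statement's English description precedes it below -/
import Mathlib

section
/- Let S be a subset of ℝ^D, let p₁,…,p_m ∈ S, and let p* ∈ S satisfy ∑_{j=1}^m ‖p*−p_j‖ ≤ ∑_{j=1}^m ‖p−p_j‖ for all p ∈ S (p* is a geometric median of p₁,…,p_m in S for the extrinsic distance). Let ω ∈ S with ω ≠ p*, let T be a linear subspace of ℝ^D, let v be the orthogonal projection of ω−p* onto T, and assume v ≠ 0. Let ψ ∈ [0,π/2) be determined by cos ψ = ‖v‖/‖ω−p*‖ (ψ is the angle between ω−p* and T). Assume there exists a curve γ : [0,1] → S with γ(0) = p* whose right derivative at 0 equals v, i.e. (γ(t)−γ(0))/t → v as t → 0⁺. Let α ∈ (0, cos ψ/(1+cos ψ)), let C_α := (1−α)/(√(1−2α)·cos ψ − α·sin ψ), and let ε > 0. If ‖ω−p*‖ ≥ C_α·ε, then the number of indices j ∈ {1,…,m} with ‖p_j−ω‖ ≥ ε is at least α·m. -/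
/-!
Moving from `p*` along `γ` cannot decrease `∑ j, ‖· - p j‖`, so its right derivative, in which
`p j ≠ p*` contributes `⟪p* - p j, v⟫ / ‖p* - p j‖` and `p j = p*` contributes `‖v‖`, is
nonnegative. Every point far from `ω` contributes at most `‖v‖`. A point within `ε` of `ω` is seen
from `p*` inside the cone of half-angle `arcsin (ε / ‖ω - p*‖)` around `ω - p*`, a direction at
angle `ψ` from `v`; so it makes angle at most `θ := ψ + arcsin (ε / ‖ω - p*‖)` with `v` and
contributes at most `-‖v‖ cos θ`. Since `C_α = 1 / sin (arccos (α / (1 - α)) - ψ)`, the hypothesis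
`C_α ε ≤ ‖ω - p*‖` says exactly that `cos θ ≥ α / (1 - α)`, and counting gives the claim.
-/

open Filter Set Real InnerProductGeometry Finset
open scoped RealInnerProductSpace Topology

section InnerProductSpace

variable {E : Type*} [NormedAddCommGroup E] [InnerProductSpace ℝ E]

theorem HasDerivWithinAt.norm_sub_const {γ : ℝ → E} {v a : E} {s : Set ℝ} {t : ℝ}
    (hγ : HasDerivWithinAt γ v s t) (ha : γ t ≠ a) :
    HasDerivWithinAt (fun t => ‖γ t - a‖) (⟪γ t - a, v⟫ / ‖γ t - a‖) s t := by
  have hpos : 0 < ‖γ t - a‖ := norm_pos_iff.2 (sub_ne_zero.2 ha)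
  convert (hγ.sub_const a).norm_sq.sqrt (by positivity) using 1
  · simp only [sqrt_sq (norm_nonneg _)]
  · rw [sqrt_sq hpos.le, mul_div_mul_left _ _ two_ne_zero]

theorem HasDerivWithinAt.norm_sub_self_Ioi {γ : ℝ → E} {v : E} {t : ℝ}
    (hγ : HasDerivWithinAt γ v (Ioi t) t) :
    HasDerivWithinAt (fun s => ‖γ s - γ t‖) ‖v‖ (Ioi t) t := by
  rw [hasDerivWithinAt_iff_tendsto_slope' (s := Ioi t) (lt_irrefl t)] at hγ ⊢
  refine hγ.norm.congr' ?_
  filter_upwards [self_mem_nhdsWithin] with s (hs : t < s)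
  simp [slope_def_module, norm_smul, abs_of_pos (sub_pos.2 hs)]

theorem IsLocalMinOn.hasDerivWithinAt_Ioi_nonneg {f : ℝ → ℝ} {f' a : ℝ}
    (h : IsLocalMinOn f (Ioi a) a) (hf : HasDerivWithinAt f f' (Ioi a) a) : 0 ≤ f' := by
  simpa using h.hasFDerivWithinAt_nonneg hf (one_mem_posTangentConeAt_iff_mem_closure.2 (by simp))

theorem card_mul_norm_add_sum_inner_div_norm_nonneg {ι : Type*} [Fintype ι] [DecidableEq ι]
    {p : ι → E} {γ : ℝ → E} {x v : E} (K : Finset ι) (hγ : HasDerivWithinAt γ v (Ioi 0) 0)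
    (hγ0 : γ 0 = x) (hmin : ∀ᶠ t in 𝓝[>] 0, ∑ j, ‖x - p j‖ ≤ ∑ j, ‖γ t - p j‖)
    (hK : ∀ j ∉ K, p j ≠ x) :
    0 ≤ #K * ‖v‖ + ∑ j ∈ Kᶜ, ⟪x - p j, v⟫ / ‖x - p j‖ := by
  subst hγ0
  -- By the triangle inequality, bounding the terms of `K` by `‖γ t - γ 0‖` keeps `0` a minimum.
  refine IsLocalMinOn.hasDerivWithinAt_Ioi_nonneg (f := fun t =>
    #K * ‖γ t - γ 0‖ + ∑ j ∈ Kᶜ, ‖γ t - p j‖) ?_ <|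
    (hγ.norm_sub_self_Ioi.const_mul _).add <|
      HasDerivWithinAt.fun_sum fun j hj => hγ.norm_sub_const (hK j (mem_compl.1 hj)).symm
  filter_upwards [hmin] with t ht
  have hsplit (y : E) : ∑ j, ‖y - p j‖ = ∑ j ∈ K, ‖y - p j‖ + ∑ j ∈ Kᶜ, ‖y - p j‖ :=
    (sum_add_sum_compl K _).symm
  have hK_le : ∑ j ∈ K, (‖γ t - p j‖ - ‖γ 0 - p j‖) ≤ #K * ‖γ t - γ 0‖ := by
    have := sum_le_card_nsmul K (fun j => ‖γ t - p j‖ - ‖γ 0 - p j‖) ‖γ t - γ 0‖ fun j _ => by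
      simpa using norm_sub_norm_le (γ t - p j) (γ 0 - p j)
    simpa using this
  rw [hsplit, hsplit] at ht
  simp only [sub_self, norm_zero, mul_zero, zero_add, sum_sub_distrib] at hK_le ⊢
  linarith

theorem Submodule.angle_starProjection_self (K : Submodule ℝ E) [K.HasOrthogonalProjection]
    (x : E) : angle (K.starProjection x) x = arccos (‖K.starProjection x‖ / ‖x‖) := by
  have h := K.re_inner_starProjection_eq_normSq x
  rw [RCLike.re_to_real, Submodule.coe_norm, ← Submodule.starProjection_apply] at h
  rw [angle, h]
  rcases eq_or_ne (K.starProjection x) 0 with h0 | h0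
  · simp [h0]
  · congr 1
    field_simp

theorem angle_le_arcsin_norm_sub_div_norm {u w : E} (hu : u ≠ 0) (h : ‖u - w‖ ≤ ‖u‖) :
    angle u w ≤ arcsin (‖u - w‖ / ‖u‖) := by
  have hR : 0 < ‖u‖ := norm_pos_iff.2 hu
  have hacute : angle u w ≤ π / 2 := by
    have hinner : 0 ≤ ⟪u, w⟫ := by
      nlinarith [norm_sub_sq_real u w, sq_nonneg ‖w‖, norm_nonneg (u - w)]
    exact arccos_le_pi_div_two.2 (div_nonneg hinner (by positivity))
  rw [le_arcsin_iff_sin_le ⟨by linarith [angle_nonneg u w, pi_pos], hacute⟩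
    ⟨by linarith [div_nonneg (norm_nonneg (u - w)) hR.le], div_le_one_of_le₀ h hR.le⟩,
    le_div_iff₀ hR]
  calc sin (angle u w) * ‖u‖ = sin (angle w (u - w)) * ‖u - w‖ :=
        sin_angle_mul_norm_eq_sin_angle_mul_norm u w
    _ ≤ ‖u - w‖ := mul_le_of_le_one_left (norm_nonneg _) (sin_le_one _)

theorem norm_mul_cos_le_inner_div_norm {v w : E} {θ : ℝ} (hw : w ≠ 0) (hθ : angle v w ≤ θ)
    (hθπ : θ ≤ π) : ‖v‖ * cos θ ≤ ⟪w, v⟫ / ‖w‖ := by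
  rw [le_div_iff₀ (norm_pos_iff.2 hw), real_inner_comm, ← cos_angle_mul_norm_mul_norm]
  have := cos_le_cos_of_nonneg_of_le_pi (angle_nonneg v w) hθπ hθ
  have := mul_nonneg (norm_nonneg v) (norm_nonneg w)
  nlinarith

theorem inner_div_norm_le_neg_norm_mul_cos {x y ω v : E} {ε θ : ℝ} (hy : ‖y - ω‖ < ε)
    (hεω : ε ≤ ‖ω - x‖) (hθ : angle v (ω - x) + arcsin (ε / ‖ω - x‖) ≤ θ) (hθπ : θ ≤ π) :
    ⟪x - y, v⟫ / ‖x - y‖ ≤ -(‖v‖ * cos θ) := by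
  have hωx : ω - x ≠ 0 := norm_pos_iff.1 ((norm_nonneg _).trans_lt (hy.trans_le hεω))
  have hyx : y - x ≠ 0 := fun h => by
    rw [sub_eq_zero.1 h, norm_sub_rev] at hy
    linarith
  have hy' : ‖(ω - x) - (y - x)‖ ≤ ε := by
    rw [sub_sub_sub_cancel_right, norm_sub_rev]
    exact hy.le
  have hcone := angle_le_arcsin_norm_sub_div_norm hωx (hy'.trans hεω)
  have hmono := arcsin_le_arcsin (div_le_div_of_nonneg_right hy' (norm_nonneg (ω - x)))
  have := norm_mul_cos_le_inner_div_norm hyx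
    ((angle_le_angle_add_angle v (ω - x) (y - x)).trans (by linarith)) hθπ
  rw [← neg_sub y, inner_neg_left, norm_neg, neg_div]
  linarith

end InnerProductSpace

theorem two_mul_lt_one_of_lt_cos_div {ψ α : ℝ} (hψ : ψ ∈ Ico 0 (π / 2))
    (hα : α < cos ψ / (1 + cos ψ)) : 2 * α < 1 := by
  have hcos : 0 ≤ cos ψ := cos_nonneg_of_mem_Icc ⟨by linarith [hψ.1, pi_pos], hψ.2.le⟩
  nlinarith [(lt_div_iff₀ (by linarith)).1 hα, cos_le_one ψ]

theorem cos_arccos_div_one_sub {α : ℝ} (hα0 : 0 ≤ α) (hα : 2 * α ≤ 1) :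
    cos (arccos (α / (1 - α))) = α / (1 - α) :=
  cos_arccos (by linarith [div_nonneg hα0 (by linarith : (0 : ℝ) ≤ 1 - α)])
    ((div_le_one (by linarith)).2 (by linarith))

theorem sin_arccos_div_one_sub_sub {α : ℝ} (ψ : ℝ) (hα0 : 0 ≤ α) (hα : 2 * α ≤ 1) :
    sin (arccos (α / (1 - α)) - ψ) = (√(1 - 2 * α) * cos ψ - α * sin ψ) / (1 - α) := by
  have h1α : 0 < 1 - α := by linarith
  have hsqrt : √(1 - (α / (1 - α)) ^ 2) = √(1 - 2 * α) / (1 - α) := by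
    rw [show 1 - (α / (1 - α)) ^ 2 = (1 - 2 * α) / (1 - α) ^ 2 by field_simp; ring,
      sqrt_div' _ (sq_nonneg _), sqrt_sq h1α.le]
  rw [sin_sub, sin_arccos, cos_arccos_div_one_sub hα0 hα, hsqrt]
  ring

theorem add_arcsin_le_arccos {ψ α ε R : ℝ} (hψ : ψ ∈ Ico 0 (π / 2))
    (hα : α ∈ Ioo 0 (cos ψ / (1 + cos ψ))) (hε : 0 < ε) (hR : 0 < R)
    (hfar : (1 - α) / (√(1 - 2 * α) * cos ψ - α * sin ψ) * ε ≤ R) :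
    ψ + arcsin (ε / R) ≤ arccos (α / (1 - α)) := by
  have hα2 := two_mul_lt_one_of_lt_cos_div hψ hα.2
  obtain ⟨hψ0, hψ⟩ := hψ
  obtain ⟨hα0, hαc⟩ := hα
  have hcos : 0 < cos ψ := cos_pos_of_mem_Ioo ⟨by linarith, hψ⟩
  have h1α : 0 < 1 - α := by linarith
  have hq0 : 0 < α / (1 - α) := div_pos hα0 h1α
  have hqc : α / (1 - α) < cos ψ := by
    rw [lt_div_iff₀ (by linarith)] at hαc
    exact (div_lt_iff₀ h1α).2 (by linarith)
  set θ := arccos (α / (1 - α))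
  have hψθ : ψ < θ := by
    have := strictAntiOn_arccos ⟨by linarith, by linarith [cos_le_one ψ]⟩
      ⟨by linarith, cos_le_one ψ⟩ hqc
    rwa [arccos_cos hψ0 (by linarith)] at this
  have hθ : θ ≤ π / 2 := arccos_le_pi_div_two.2 hq0.le
  have hsin : 0 < sin (θ - ψ) := sin_pos_of_pos_of_lt_pi (by linarith) (by linarith)
  have hN : √(1 - 2 * α) * cos ψ - α * sin ψ = (1 - α) * sin (θ - ψ) := by
    rw [sin_arccos_div_one_sub_sub ψ hα0.le hα2.le]
    field_simp
  have hεR : ε / R ≤ sin (θ - ψ) := by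
    rw [hN, div_mul_eq_mul_div, div_le_iff₀ (by positivity)] at hfar
    rw [div_le_iff₀ hR]
    nlinarith
  have := (arcsin_le_iff_le_sin ⟨by linarith [div_pos hε hR], hεR.trans (sin_le_one _)⟩
    ⟨by linarith, by linarith⟩).2 hεR
  linarith

theorem mul_card_le_card_of_nonneg_card_mul_add_sum {ι : Type*} [Fintype ι] [DecidableEq ι]
    (K : Finset ι) {a α : ℝ} {b : ι → ℝ} (ha : 0 < a) (hα : α < 1)
    (hb : ∀ j ∈ Kᶜ, b j ≤ -(a * (α / (1 - α)))) (hsum : 0 ≤ #K * a + ∑ j ∈ Kᶜ, b j) :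
    α * Fintype.card ι ≤ #K := by
  have hfew := sum_le_card_nsmul Kᶜ b _ hb
  rw [nsmul_eq_mul] at hfew
  have hcard : (#K : ℝ) + #Kᶜ = Fintype.card ι := by exact_mod_cast card_add_card_compl K
  have : a * (#Kᶜ * (α / (1 - α))) ≤ a * #K := by linarith
  have := le_of_mul_le_mul_left this ha
  rw [mul_div_assoc', div_le_iff₀ (by linarith)] at this
  rw [← hcard]
  linarith

open Finset Real in
theorem median_of_means_extrinsic_general
    (D : ℕ) (S : Set (EuclideanSpace ℝ (Fin D)))
    (m : ℕ) (p : Fin m → EuclideanSpace ℝ (Fin D))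
    (pstar : EuclideanSpace ℝ (Fin D))
    (hmed : ∀ q ∈ S, ∑ j, ‖pstar - p j‖ ≤ ∑ j, ‖q - p j‖)
    (ω : EuclideanSpace ℝ (Fin D)) (hωne : ω ≠ pstar)
    (T : Submodule ℝ (EuclideanSpace ℝ (Fin D)))
    (v : EuclideanSpace ℝ (Fin D))
    (hv : v = (T.orthogonalProjection (ω - pstar) : EuclideanSpace ℝ (Fin D)))
    (hvne : v ≠ 0)
    (ψ : ℝ) (hψ : ψ ∈ Set.Ico (0 : ℝ) (π / 2))
    (hcosψ : Real.cos ψ = ‖v‖ / ‖ω - pstar‖)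
    (γ : ℝ → EuclideanSpace ℝ (Fin D))
    (hγS : ∀ t ∈ Set.Icc (0 : ℝ) 1, γ t ∈ S) (hγ0 : γ 0 = pstar)
    (hγ' : Filter.Tendsto (fun t : ℝ => t⁻¹ • (γ t - γ 0))
      (nhdsWithin 0 (Set.Ioi 0)) (nhds v))
    (α : ℝ) (hα : α ∈ Set.Ioo (0 : ℝ) (Real.cos ψ / (1 + Real.cos ψ)))
    (Cα : ℝ)
    (hCα : Cα = (1 - α) / (Real.sqrt (1 - 2 * α) * Real.cos ψ - α * Real.sin ψ))
    (ε : ℝ) (hε : 0 < ε)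
    (hfar : Cα * ε ≤ ‖ω - pstar‖) :
    α * m ≤ ({j | ε ≤ ‖p j - ω‖} : Finset (Fin m)).card := by
  have hR : 0 < ‖ω - pstar‖ := norm_pos_iff.2 (sub_ne_zero.2 hωne)
  have hα2 := two_mul_lt_one_of_lt_cos_div hψ hα.2
  have hcone := add_arcsin_le_arccos hψ hα hε hR (hCα ▸ hfar)
  have hεR : ε < ‖ω - pstar‖ := (div_lt_one hR).1 <| arcsin_lt_pi_div_two.1 <| by
    linarith [hψ.1, arccos_lt_pi_div_two.2 (div_pos hα.1 (by linarith : (0 : ℝ) < 1 - α))]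
  have hangle : angle v (ω - pstar) = ψ := by
    rw [hv, ← Submodule.starProjection_apply, Submodule.angle_starProjection_self,
      Submodule.starProjection_apply, ← hv, ← hcosψ, arccos_cos hψ.1 (by linarith [hψ.2, pi_pos])]
  set K : Finset (Fin m) := {j | ε ≤ ‖p j - ω‖}
  have hclose : ∀ j ∉ K, ‖p j - ω‖ < ε := by simp [K]
  have hnear (j) (hj : j ∈ Kᶜ) : ⟪pstar - p j, v⟫ / ‖pstar - p j‖ ≤ -(‖v‖ * (α / (1 - α))) :=
    cos_arccos_div_one_sub hα.1.le hα2.le ▸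
      inner_div_norm_le_neg_norm_mul_cos (hclose j (mem_compl.1 hj)) hεR.le (hangle ▸ hcone)
        (arccos_le_pi _)
  have hK (j) (hj : j ∉ K) : p j ≠ pstar := fun h =>
    (hclose j hj).not_ge (by rw [h, norm_sub_rev]; exact hεR.le)
  have hγ_deriv : HasDerivWithinAt γ v (Ioi 0) 0 :=
    (hasDerivWithinAt_iff_tendsto_slope' (s := Ioi 0) (lt_irrefl 0)).2
      (hγ'.congr fun t => by rw [slope_def_module, sub_zero])
  have hmin : ∀ᶠ t in 𝓝[>] 0, ∑ j, ‖pstar - p j‖ ≤ ∑ j, ‖γ t - p j‖ := by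
    filter_upwards [Ioc_mem_nhdsGT zero_lt_one] with t ht
    exact hmed _ (hγS t (Ioc_subset_Icc_self ht))
  have hopt := card_mul_norm_add_sum_inner_div_norm_nonneg K hγ_deriv hγ0 hmin hK
  simpa using mul_card_le_card_of_nonneg_card_mul_add_sum K (norm_pos_iff.2 hvne) (by linarith)
    hnear hopt

open Finset Real in
/-- Extrinsic case of Lemma 1 in ambient Euclidean space `ℝ^D`. -/
theorem median_of_means_extrinsic
    (D : ℕ) (S : Set (EuclideanSpace ℝ (Fin D)))
    (m : ℕ) (p : Fin m → EuclideanSpace ℝ (Fin D))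
    (pstar : EuclideanSpace ℝ (Fin D)) (hpstarS : pstar ∈ S)
    (hp : ∀ j, p j ∈ S)
    (hmed : ∀ q ∈ S, ∑ j, ‖pstar - p j‖ ≤ ∑ j, ‖q - p j‖)
    (ω : EuclideanSpace ℝ (Fin D)) (hωS : ω ∈ S) (hωne : ω ≠ pstar)
    (T : Submodule ℝ (EuclideanSpace ℝ (Fin D)))
    (v : EuclideanSpace ℝ (Fin D))
    (hv : v = (T.orthogonalProjection (ω - pstar) : EuclideanSpace ℝ (Fin D)))
    (hvne : v ≠ 0)
    (ψ : ℝ) (hψ : ψ ∈ Set.Ico (0 : ℝ) (π / 2))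
    (hcosψ : Real.cos ψ = ‖v‖ / ‖ω - pstar‖)
    (γ : ℝ → EuclideanSpace ℝ (Fin D))
    (hγS : ∀ t ∈ Set.Icc (0 : ℝ) 1, γ t ∈ S) (hγ0 : γ 0 = pstar)
    (hγ' : Filter.Tendsto (fun t : ℝ => t⁻¹ • (γ t - γ 0))
      (nhdsWithin 0 (Set.Ioi 0)) (nhds v))
    (α : ℝ) (hα : α ∈ Set.Ioo (0 : ℝ) (Real.cos ψ / (1 + Real.cos ψ)))
    (Cα : ℝ)
    (hCα : Cα = (1 - α) / (Real.sqrt (1 - 2 * α) * Real.cos ψ - α * Real.sin ψ))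
    (ε : ℝ) (hε : 0 < ε)
    (hfar : Cα * ε ≤ ‖ω - pstar‖) :
    α * m ≤ ({j | ε ≤ ‖p j - ω‖} : Finset (Fin m)).card :=
  median_of_means_extrinsic_general D S m p pstar hmed ω hωne T v hv hvne ψ hψ hcosψ γ hγS hγ0 hγ' α
    hα Cα hCα ε hε hfar
end

section
/- Let H be a real inner product space, let p₁,…,p_m ∈ H, and let p* ∈ H satisfy ∑_{j=1}^m ‖p*−p_j‖ ≤ ∑_{j=1}^m ‖p−p_j‖ for all p ∈ H (p* is a geometric median of p₁,…,p_m). Let α ∈ (0,1/2), let C_α := (1−α)/√(1−2α), let ε > 0, and let ω ∈ H. If ‖ω−p*‖ ≥ C_α·ε, then the number of indices j ∈ {1,…,m} with ‖p_j−ω‖ ≥ ε is at least α·m. -/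
/-!
Move `p*` a distance `t` towards `ω`. A point with `‖p_j - ω‖ ≥ ε` gets at most `t` farther
away. Every other point lies in the ball of radius `ε` about `ω`, which is seen from `p*`, at
distance `d ≥ C_α ε`, under a half-angle whose cosine is at least `α / (1 - α)`; its distance
therefore drops by at least `t α / (1 - α) - O(t²)`. Minimality of `p*` as `t → 0` gives
`#far ≥ α / (1 - α) · #near`, i.e. `#far ≥ α m`.
-/

open Finset Filter Topology RealInnerProductSpace

theorem one_lt_one_sub_div_sqrt_one_sub_two_mul {α : ℝ} (hα0 : 0 < α) (hα2 : α < 1 / 2) :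
    1 < (1 - α) / √(1 - 2 * α) := by
  have hsqrt : 0 < √(1 - 2 * α) := Real.sqrt_pos.mpr (by linarith)
  rw [one_lt_div hsqrt, Real.sqrt_lt' (by linarith)]
  nlinarith

/- `C_α = (1 - α) / √(1 - 2α)` is chosen so that `ε / d ≤ 1 / C_α` is equivalent to
`(α / (1 - α))² + (ε / d)² ≤ 1`. -/
theorem sq_div_one_sub_mul_sq_add_sq_le_sq {α ε d : ℝ} (hα0 : 0 < α) (hα2 : α < 1 / 2)
    (hε : 0 ≤ ε) (h : (1 - α) / √(1 - 2 * α) * ε ≤ d) :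
    (α / (1 - α)) ^ 2 * d ^ 2 + ε ^ 2 ≤ d ^ 2 := by
  have h1α : 0 < 1 - α := by linarith
  have hsqrt : 0 < √(1 - 2 * α) := Real.sqrt_pos.mpr (by linarith)
  rw [div_mul_eq_mul_div, div_le_iff₀ hsqrt] at h
  have hsq : ((1 - α) * ε) ^ 2 ≤ d ^ 2 * (1 - 2 * α) :=
    calc ((1 - α) * ε) ^ 2 ≤ (d * √(1 - 2 * α)) ^ 2 := pow_le_pow_left₀ (by positivity) h 2
      _ = d ^ 2 * (1 - 2 * α) := by rw [mul_pow, Real.sq_sqrt (by linarith)]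
  have hdiff : d ^ 2 - ((α / (1 - α)) ^ 2 * d ^ 2 + ε ^ 2)
      = (d ^ 2 * (1 - 2 * α) - ((1 - α) * ε) ^ 2) / (1 - α) ^ 2 := by
    field_simp
    ring
  rw [← sub_nonneg, hdiff]
  exact div_nonneg (by linarith) (sq_nonneg _)

theorem nonneg_of_forall_pos_nonneg_mul_add_mul_sq {a b : ℝ}
    (h : ∀ t > 0, 0 ≤ a * t + b * t ^ 2) : 0 ≤ a := by
  have hlim : Tendsto (fun t => a + b * t) (𝓝[>] 0) (𝓝 a) := by
    apply tendsto_nhdsWithin_of_tendsto_nhds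
    simpa using (show Continuous fun t : ℝ => a + b * t by fun_prop).tendsto 0
  refine ge_of_tendsto hlim ?_
  filter_upwards [self_mem_nhdsWithin] with t (ht : 0 < t)
  exact nonneg_of_mul_nonneg_right (by nlinarith [h t ht]) ht

def IsGeometricMedian {ι E : Type*} [Fintype ι] [SeminormedAddCommGroup E] (p : ι → E) (z : E) :
    Prop :=
  ∀ q, ∑ j, ‖z - p j‖ ≤ ∑ j, ‖q - p j‖

section InnerProductSpace

variable {E : Type*} [NormedAddCommGroup E] [InnerProductSpace ℝ E]

theorem norm_add_le_norm_add_inner_div {a : E} (ha : a ≠ 0) (v : E) :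
    ‖a + v‖ ≤ ‖a‖ + ⟪a, v⟫ / ‖a‖ + ‖v‖ ^ 2 / (2 * ‖a‖) := by
  have hpos : 0 < ‖a‖ := norm_pos_iff.mpr ha
  have hrhs : ‖a‖ + ⟪a, v⟫ / ‖a‖ + ‖v‖ ^ 2 / (2 * ‖a‖)
      = (‖a‖ ^ 2 + ‖a + v‖ ^ 2) / (2 * ‖a‖) := by
    rw [norm_add_sq_real]
    field_simp
    ring
  rw [hrhs, le_div_iff₀ (by positivity)]
  nlinarith [sq_nonneg (‖a‖ - ‖a + v‖)]

/- Geometrically: if `κ² + (r / ‖w‖)² ≤ 1`, then `κ` bounds from below the cosine of the angle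
between `w` and any `x` in the closed ball of radius `r` about `w`. -/
theorem mul_norm_mul_norm_le_inner_of_norm_sub_le {x w : E} {κ r : ℝ} (hκ : 0 ≤ κ)
    (hxw : ‖x - w‖ ≤ r) (hr : κ ^ 2 * ‖w‖ ^ 2 + r ^ 2 ≤ ‖w‖ ^ 2) :
    κ * (‖x‖ * ‖w‖) ≤ ⟪x, w⟫ := by
  have hsub := norm_sub_sq_real x w
  have hr2 : ‖x - w‖ ^ 2 ≤ r ^ 2 := pow_le_pow_left₀ (norm_nonneg _) hxw 2
  have hinner : 0 ≤ ⟪x, w⟫ := by nlinarith [sq_nonneg ‖x‖, sq_nonneg κ, sq_nonneg ‖w‖]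
  refine (pow_le_pow_iff_left₀ (by positivity) hinner two_ne_zero).mp ?_
  nlinarith [sq_nonneg (⟪x, w⟫ - ‖x‖ ^ 2), mul_le_mul_of_nonneg_left hr (sq_nonneg ‖x‖),
    mul_nonneg (sq_nonneg ‖x‖) (sub_nonneg.mpr hr2)]

theorem norm_add_smul_sub_le_of_mul_norm_le_inner {y z u : E} {κ D t : ℝ} (hu : ‖u‖ = 1)
    (hD : 0 < D) (hDy : D ≤ ‖y - z‖) (hκ : κ * ‖y - z‖ ≤ ⟪y - z, u⟫) (ht : 0 ≤ t) :
    ‖z + t • u - y‖ ≤ ‖z - y‖ - κ * t + t ^ 2 / (2 * D) := by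
  have hpos : 0 < ‖y - z‖ := hD.trans_le hDy
  have hzy : z - y ≠ 0 := by rw [← norm_pos_iff, norm_sub_rev]; exact hpos
  have h := norm_add_le_norm_add_inner_div hzy (t • u)
  rw [norm_sub_rev z y, norm_smul, hu, Real.norm_of_nonneg ht, mul_one] at h
  have hinner : ⟪z - y, t • u⟫ / ‖y - z‖ ≤ -κ * t := by
    rw [div_le_iff₀ hpos, real_inner_smul_right, ← neg_sub, inner_neg_left]
    nlinarith
  have hquad : t ^ 2 / (2 * ‖y - z‖) ≤ t ^ 2 / (2 * D) := by gcongr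
  rw [add_sub_right_comm, norm_sub_rev z y]
  linarith

theorem sum_norm_add_smul_sub_le {ι : Type*} [Fintype ι] [DecidableEq ι] (p : ι → E)
    (F : Finset ι) {z u : E} {κ D t : ℝ} (hu : ‖u‖ = 1) (hD : 0 < D)
    (hnear : ∀ j ∉ F, D ≤ ‖p j - z‖ ∧ κ * ‖p j - z‖ ≤ ⟪p j - z, u⟫) (ht : 0 ≤ t) :
    ∑ j, ‖z + t • u - p j‖ ≤ ∑ j, ‖z - p j‖ + (#F - κ * #Fᶜ) * t + #Fᶜ / (2 * D) * t ^ 2 := by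
  have hfar : ∑ j ∈ F, ‖z + t • u - p j‖ ≤ ∑ j ∈ F, (‖z - p j‖ + t) :=
    sum_le_sum fun j _ => by
      calc ‖z + t • u - p j‖ = ‖z - p j + t • u‖ := by rw [add_sub_right_comm]
        _ ≤ ‖z - p j‖ + ‖t • u‖ := norm_add_le _ _
        _ = ‖z - p j‖ + t := by rw [norm_smul, hu, Real.norm_of_nonneg ht, mul_one]
  have hclose : ∑ j ∈ Fᶜ, ‖z + t • u - p j‖ ≤ ∑ j ∈ Fᶜ, (‖z - p j‖ - κ * t + t ^ 2 / (2 * D)) :=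
    sum_le_sum fun j hj => by
      obtain ⟨hDj, hκj⟩ := hnear j (mem_compl.mp hj)
      exact norm_add_smul_sub_le_of_mul_norm_le_inner hu hD hDj hκj ht
  simp only [sum_add_distrib, sum_sub_distrib, sum_const, nsmul_eq_mul] at hfar hclose
  rw [← sum_add_sum_compl F, ← sum_add_sum_compl F fun j => ‖z - p j‖]
  linear_combination hfar + hclose

theorem IsGeometricMedian.mul_card_compl_le_card {ι : Type*} [Fintype ι] [DecidableEq ι]
    {p : ι → E} {z : E} (hz : IsGeometricMedian p z) (F : Finset ι) {u : E} {κ D : ℝ}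
    (hu : ‖u‖ = 1) (hD : 0 < D)
    (hnear : ∀ j ∉ F, D ≤ ‖p j - z‖ ∧ κ * ‖p j - z‖ ≤ ⟪p j - z, u⟫) :
    κ * #Fᶜ ≤ #F := by
  have hfirst_order : 0 ≤ (#F - κ * #Fᶜ : ℝ) := by
    refine nonneg_of_forall_pos_nonneg_mul_add_mul_sq (b := #Fᶜ / (2 * D)) fun t ht => ?_
    linarith [hz (z + t • u), sum_norm_add_smul_sub_le p F hu hD hnear ht.le]
  linarith

end InnerProductSpace

open Finset in
/-- Flat (linear) instance of Lemma 1(a): in a real inner product space, if `p*` is a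
geometric median of `p₁,…,p_m` and `ω` is at least `C_α·ε` away from `p*`, then at least
an `α` fraction of the points are at least `ε` away from `ω`. -/
theorem median_of_means_flat
    {H : Type*} [NormedAddCommGroup H] [InnerProductSpace ℝ H]
    (m : ℕ) (p : Fin m → H) (pstar : H)
    (hmed : ∀ q : H, ∑ j, ‖pstar - p j‖ ≤ ∑ j, ‖q - p j‖)
    (α : ℝ) (hα : α ∈ Set.Ioo (0 : ℝ) (1/2))
    (ε : ℝ) (hε : 0 < ε) (ω : H)
    (hfar : (1 - α) / Real.sqrt (1 - 2 * α) * ε ≤ ‖ω - pstar‖) :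
    α * m ≤ ({j | ε ≤ ‖p j - ω‖} : Finset (Fin m)).card := by
  obtain ⟨hα0, hα2⟩ := hα
  set F : Finset (Fin m) := {j | ε ≤ ‖p j - ω‖}
  set w := ω - pstar
  have hεw : ε < ‖w‖ :=
    (lt_mul_of_one_lt_left hε (one_lt_one_sub_div_sqrt_one_sub_two_mul hα0 hα2)).trans_le hfar
  have hw : w ≠ 0 := norm_pos_iff.mp (hε.trans hεw)
  have hcone := sq_div_one_sub_mul_sq_add_sq_le_sq hα0 hα2 hε.le hfar
  have hnear : ∀ j ∉ F, ‖w‖ - ε ≤ ‖p j - pstar‖ ∧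
      α / (1 - α) * ‖p j - pstar‖ ≤ ⟪p j - pstar, ‖w‖⁻¹ • w⟫ := by
    intro j hj
    have hjw : ‖p j - pstar - w‖ ≤ ε := by
      simp only [F, mem_filter, mem_univ, true_and, not_le] at hj
      rw [sub_sub_sub_cancel_right]
      exact hj.le
    refine ⟨by linarith [norm_sub_norm_le w (p j - pstar), norm_sub_rev w (p j - pstar)], ?_⟩
    rw [real_inner_smul_right, inv_mul_eq_div, le_div_iff₀ (norm_pos_iff.mpr hw), mul_assoc]
    exact mul_norm_mul_norm_le_inner_of_norm_sub_le (by bound) hjw hcone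
  have hcard := IsGeometricMedian.mul_card_compl_le_card hmed F (norm_smul_inv_norm hw)
    (by linarith) hnear
  have hm : (#Fᶜ : ℝ) + #F = m := by
    exact_mod_cast (card_compl_add_card F).trans (Fintype.card_fin m)
  rw [div_mul_eq_mul_div, div_le_iff₀ (by linarith)] at hcard
  linear_combination hcard - α * hm
end

section
/- Let H be a real inner product space, let p₁,…,p_m ∈ H, and let γ : [0,1] → H be a curve with right derivative v at 0, i.e. (γ(t)−γ(0))/t → v as t → 0⁺. Define L(x) := ∑_{j=1}^m ‖x−p_j‖. Then the one-sided limit lim_{t→0⁺} (L(γ(t)) − L(γ(0)))/t exists and equals ∑_{j : p_j ≠ γ(0)} ⟨v, γ(0)−p_j⟩/‖γ(0)−p_j‖ + ‖v‖ · #{j : p_j = γ(0)}. -/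
/-!
The objective is differentiated term by term from the right. Where `p ≠ γ 0`, the norm is
differentiable at `γ 0 - p` with gradient `(γ 0 - p) / ‖γ 0 - p‖`. Where `p = γ 0`, the
distance `‖γ t - γ 0‖` is not differentiable, but for `t > 0` its slope is the norm of the
slope of `γ`, so its right derivative is `‖v‖`.
-/

open scoped Classical

open Filter Topology Set
open scoped RealInnerProductSpace

section RightDerivative

variable {E : Type*} [NormedAddCommGroup E] [NormedSpace ℝ E] {f : ℝ → E} {f' : E}

theorem hasDerivWithinAt_Ioi_zero_iff_tendsto_inv_smul :
    HasDerivWithinAt f f' (Ioi 0) 0 ↔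
      Tendsto (fun t : ℝ => t⁻¹ • (f t - f 0)) (𝓝[>] 0) (𝓝 f') := by
  rw [hasDerivWithinAt_iff_tendsto_slope' self_notMem_Ioi]
  simp only [slope_fun_def, vsub_eq_sub, sub_zero]

theorem HasDerivWithinAt.norm_sub_self_Ioi_s2 {x : ℝ} (hf : HasDerivWithinAt f f' (Ioi x) x) :
    HasDerivWithinAt (fun t => ‖f t - f x‖) ‖f'‖ (Ioi x) x := by
  rw [hasDerivWithinAt_iff_tendsto_slope' self_notMem_Ioi] at hf ⊢
  refine hf.norm.congr' ?_
  filter_upwards [self_mem_nhdsWithin] with t (ht : x < t)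
  rw [slope_def_module, slope_def_field, sub_self, norm_zero, sub_zero, norm_smul, norm_inv,
    Real.norm_of_nonneg (sub_nonneg.2 ht.le), div_eq_inv_mul]

end RightDerivative

section InnerProductSpace

variable {H : Type*} [NormedAddCommGroup H] [InnerProductSpace ℝ H] {f : ℝ → H} {f' : H}

theorem HasDerivWithinAt.norm {s : Set ℝ} {x : ℝ} (hf : HasDerivWithinAt f f' s x)
    (h0 : f x ≠ 0) : HasDerivWithinAt (‖f ·‖) (⟪f x, f'⟫ / ‖f x‖) s x := by
  have hsq := hf.norm_sq.sqrt (by positivity)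
  simp only [Real.sqrt_sq (norm_nonneg _)] at hsq
  convert hsq using 1
  field_simp

theorem HasDerivWithinAt.norm_sub_const_Ioi {x : ℝ} (hf : HasDerivWithinAt f f' (Ioi x) x)
    (p : H) :
    HasDerivWithinAt (fun t => ‖f t - p‖)
      (if p = f x then ‖f'‖ else ⟪f', f x - p⟫ / ‖f x - p‖) (Ioi x) x := by
  split_ifs with hp
  · subst hp
    exact hf.norm_sub_self_Ioi_s2
  · rw [real_inner_comm]
    exact (hf.sub_const p).norm (sub_ne_zero.2 (Ne.symm hp))

end InnerProductSpace

open Finset in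
/-- First-variation formula for the sum-of-distances objective along a curve with a
right derivative at `0`, in a real inner product space. -/
theorem first_variation_sum_of_distances
    {H : Type*} [NormedAddCommGroup H] [InnerProductSpace ℝ H]
    (m : ℕ) (p : Fin m → H) (γ : ℝ → H) (v : H)
    (hγ' : Filter.Tendsto (fun t : ℝ => t⁻¹ • (γ t - γ 0))
      (nhdsWithin 0 (Set.Ioi 0)) (nhds v)) :
    Filter.Tendsto
      (fun t : ℝ => ((∑ j, ‖γ t - p j‖) - ∑ j, ‖γ 0 - p j‖) / t)
      (nhdsWithin 0 (Set.Ioi 0))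
      (nhds (∑ j ∈ {j | p j ≠ γ 0}, (inner ℝ v (γ 0 - p j) : ℝ) / ‖γ 0 - p j‖
        + ‖v‖ * ({j | p j = γ 0} : Finset (Fin m)).card)) := by
  have hγ := hasDerivWithinAt_Ioi_zero_iff_tendsto_inv_smul.mpr hγ'
  have hL := HasDerivWithinAt.fun_sum (u := univ) fun j _ => hγ.norm_sub_const_Ioi (p j)
  rw [sum_ite, sum_const, nsmul_eq_mul, add_comm, mul_comm] at hL
  simpa only [smul_eq_mul, div_eq_inv_mul] using
    hasDerivWithinAt_Ioi_zero_iff_tendsto_inv_smul.mp hL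
end

section
/- Let (M,ρ) be a metric space, let μ ∈ M, and let μ₁,…,μ_m be independent M-valued random variables on a probability space. Let μ* be an M-valued random variable, let α ∈ (0,1), C > 0, ε > 0, and suppose that pointwise on the sample space the implication holds: if ρ(μ*,μ) > C·ε then the number of indices j with ρ(μ_j,μ) ≥ ε is at least α·m. Suppose moreover that P(ρ(μ_j,μ) ≥ ε) ≤ η for every j = 1,…,m, where 0 < η < α. Then P(ρ(μ*,μ) > C·ε) ≤ exp(−m·φ(α,η)), where φ(α,η) := (1−α)·log((1−α)/(1−η)) + α·log(α/η). -/
/-!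
If `μ*` is far from `μ`, then at least `α m` of the independent events
`{ρ(μ_j, μ) ≥ ε}` occur, each of which has probability at most `η < α`. Chernoff's bound for the
sum of their indicators, taken at the tilt `t` with `e^t = α (1 - η) / (η (1 - α))`, bounds the
probability of this by `exp (-m φ(α, η))`.
-/

open MeasureTheory Real

namespace ProbabilityTheory

variable {Ω ι : Type*} {mΩ : MeasurableSpace Ω} {μ : Measure Ω}

lemma iIndepFun.iIndepSet_preimage {β : Type*} [MeasurableSpace β] {f : ι → Ω → β}
    (h : iIndepFun f μ) (hf : ∀ i, Measurable (f i)) {s : Set β} (hs : MeasurableSet s) :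
    iIndepSet (fun i ↦ f i ⁻¹' s) μ :=
  (iIndepSet_iff_meas_biInter fun i ↦ hf i hs).2 fun S ↦
    h.measure_inter_preimage_eq_mul S fun _ _ ↦ hs

lemma exp_mul_indicator_one (A : Set Ω) (t : ℝ) :
    (fun ω ↦ exp (t * A.indicator (fun _ ↦ 1) ω)) =
      fun ω ↦ 1 + A.indicator (fun _ ↦ exp t - 1) ω := by
  funext ω
  by_cases h : ω ∈ A <;> simp [h]

lemma integrable_exp_mul_indicator_one [IsFiniteMeasure μ] {A : Set Ω} (hA : MeasurableSet A)
    (t : ℝ) : Integrable (fun ω ↦ exp (t * A.indicator (fun _ ↦ 1) ω)) μ := by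
  rw [exp_mul_indicator_one]
  exact (integrable_const 1).add ((integrable_const _).indicator hA)

lemma mgf_indicator_one [IsProbabilityMeasure μ] {A : Set Ω} (hA : MeasurableSet A) (t : ℝ) :
    mgf (A.indicator fun _ ↦ 1) μ t = 1 + (exp t - 1) * μ.real A := by
  rw [mgf, exp_mul_indicator_one,
    integral_add (integrable_const 1) ((integrable_const _).indicator hA),
    integral_const, integral_indicator_const _ hA]
  simp [mul_comm]

lemma mgf_indicator_one_le [IsProbabilityMeasure μ] {A : Set Ω} (hA : MeasurableSet A)
    {t η : ℝ} (ht : 0 ≤ t) (hη : μ.real A ≤ η) :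
    mgf (A.indicator fun _ ↦ 1) μ t ≤ 1 + (exp t - 1) * η := by
  rw [mgf_indicator_one hA]
  gcongr
  linarith [one_le_exp ht]

lemma iIndepSet.measureReal_sum_indicator_ge_le_exp_mul [Fintype ι] {A : ι → Set Ω}
    (hindep : iIndepSet A μ) (hA : ∀ i, MeasurableSet (A i)) {t η : ℝ} (ht : 0 ≤ t)
    (hη : ∀ i, μ.real (A i) ≤ η) (a : ℝ) :
    μ.real {ω | a ≤ ∑ i, (A i).indicator (fun _ ↦ 1) ω} ≤
      exp (-t * a) * (1 + (exp t - 1) * η) ^ Fintype.card ι := by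
  have : IsProbabilityMeasure μ := hindep.isProbabilityMeasure
  set X : ι → Ω → ℝ := fun i ↦ (A i).indicator fun _ ↦ 1
  have hX : iIndepFun X μ := hindep.iIndepFun_indicator
  have hXmeas : ∀ i, Measurable (X i) := fun i ↦ measurable_const.indicator (hA i)
  have hchernoff := measure_ge_le_exp_mul_mgf a ht
    (hX.integrable_exp_mul_sum hXmeas (s := Finset.univ) fun i _ ↦
      integrable_exp_mul_indicator_one (hA i) t)
  rw [hX.mgf_sum hXmeas] at hchernoff
  calc μ.real {ω | a ≤ ∑ i, X i ω} = μ.real {ω | a ≤ (∑ i, X i) ω} := by simp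
    _ ≤ exp (-t * a) * ∏ i, mgf (X i) μ t := hchernoff
    _ ≤ exp (-t * a) * ∏ _i : ι, (1 + (exp t - 1) * η) := by
      gcongr with i
      · exact fun i _ ↦ mgf_nonneg
      · exact mgf_indicator_one_le (hA i) ht (hη i)
    _ = exp (-t * a) * (1 + (exp t - 1) * η) ^ Fintype.card ι := by simp

/-- The relative entropy of Bernoulli(`α`) with respect to Bernoulli(`η`); the paper's
`φ(α, η)`. -/
noncomputable def bernoulliKL (α η : ℝ) : ℝ :=
  (1 - α) * log ((1 - α) / (1 - η)) + α * log (α / η)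

/-- This `t` minimises the Chernoff factor `e^{-tα} (1 + (e^t - 1) η)`. -/
lemma exp_neg_mul_mul_one_add_eq_exp_neg_bernoulliKL {α η t : ℝ} (hα0 : 0 < α) (hα1 : α < 1)
    (hη0 : 0 < η) (hη1 : η < 1) (ht : exp t = α * (1 - η) / (η * (1 - α))) :
    exp (-t * α) * (1 + (exp t - 1) * η) = exp (-bernoulliKL α η) := by
  have h1α : 0 < 1 - α := by linarith
  have h1η : 0 < 1 - η := by linarith
  have hfactor : 1 + (exp t - 1) * η = exp (log (1 - η) - log (1 - α)) := by
    rw [exp_sub, exp_log h1η, exp_log h1α, ht]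
    field_simp
    ring
  have hlog : t = log α + log (1 - η) - (log η + log (1 - α)) := by
    rw [← log_exp t, ht, log_div (by positivity) (by positivity), log_mul hα0.ne' h1η.ne',
      log_mul hη0.ne' h1α.ne']
  rw [hfactor, ← exp_add, bernoulliKL, log_div h1α.ne' h1η.ne', log_div hα0.ne' hη0.ne', hlog]
  ring_nf

theorem iIndepSet.measureReal_sum_indicator_ge_le_exp_bernoulliKL [Fintype ι]
    {A : ι → Set Ω} (hindep : iIndepSet A μ) (hA : ∀ i, MeasurableSet (A i)) {α η : ℝ}
    (hα : α < 1) (hη0 : 0 < η) (hηα : η < α) (hη : ∀ i, μ.real (A i) ≤ η) :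
    μ.real {ω | α * Fintype.card ι ≤ ∑ i, (A i).indicator (fun _ ↦ 1) ω} ≤
      exp (-Fintype.card ι * bernoulliKL α η) := by
  have hα0 : 0 < α := hη0.trans hηα
  have hη1 : η < 1 := hηα.trans hα
  have hratio : 0 < α * (1 - η) / (η * (1 - α)) := by
    apply div_pos <;> apply mul_pos <;> linarith
  set t := log (α * (1 - η) / (η * (1 - α)))
  have ht : 0 ≤ t := by
    refine log_nonneg ((one_le_div (by nlinarith)).2 ?_)
    nlinarith
  calc _ ≤ exp (-t * (α * Fintype.card ι)) * (1 + (exp t - 1) * η) ^ Fintype.card ι :=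
        hindep.measureReal_sum_indicator_ge_le_exp_mul hA ht hη _
    _ = (exp (-t * α) * (1 + (exp t - 1) * η)) ^ Fintype.card ι := by
        rw [mul_pow, ← exp_nat_mul]
        ring_nf
    _ = exp (-Fintype.card ι * bernoulliKL α η) := by
        rw [exp_neg_mul_mul_one_add_eq_exp_neg_bernoulliKL hα0 hα hη0 hη1 (exp_log hratio),
          ← exp_nat_mul]
        ring_nf

end ProbabilityTheory

open MeasureTheory ProbabilityTheory Finset in
theorem median_of_means_concentration_general
    {M : Type*} [MetricSpace M] [MeasurableSpace M] [BorelSpace M]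
    {Ω : Type*} [MeasureSpace Ω] [IsProbabilityMeasure (ℙ : Measure Ω)]
    (m : ℕ) (μs : Fin m → Ω → M) (hmeas : ∀ j, Measurable (μs j))
    (hindep : ProbabilityTheory.iIndepFun μs ℙ)
    (μ : M) (μstar : Ω → M)
    (α : ℝ) (hα : α ∈ Set.Ioo (0 : ℝ) 1) (C ε : ℝ)
    (himp : ∀ x : Ω, C * ε < dist (μstar x) μ →
      α * m ≤ (({j | ε ≤ dist (μs j x) μ} : Finset (Fin m)).card : ℝ))
    (η : ℝ) (hη : 0 < η) (hηα : η < α)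
    (hconc : ∀ j, ℙ {x | ε ≤ dist (μs j x) μ} ≤ ENNReal.ofReal η) :
    ℙ {x | C * ε < dist (μstar x) μ} ≤
      ENNReal.ofReal (Real.exp (-(m : ℝ) *
        ((1 - α) * Real.log ((1 - α) / (1 - η)) + α * Real.log (α / η)))) := by
  set A : Fin m → Set Ω := fun j ↦ μs j ⁻¹' {y | ε ≤ dist y μ}
  have hfar : MeasurableSet {y : M | ε ≤ dist y μ} :=
    (isClosed_le continuous_const (continuous_id.dist continuous_const)).measurableSet
  have hmany : ∀ x, C * ε < dist (μstar x) μ → α * m ≤ ∑ j, (A j).indicator (fun _ ↦ 1) x := by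
    intro x hx
    simpa [A, Set.indicator_apply, sum_boole] using himp x hx
  have hindepA : iIndepSet A ℙ := hindep.iIndepSet_preimage hmeas hfar
  have hchernoff := hindepA.measureReal_sum_indicator_ge_le_exp_bernoulliKL
    (fun j ↦ hmeas j hfar) hα.2 hη hηα fun j ↦ ENNReal.toReal_le_of_le_ofReal hη.le (hconc j)
  rw [Fintype.card_fin] at hchernoff
  rw [ENNReal.le_ofReal_iff_toReal_le (measure_ne_top _ _) (exp_nonneg _)]
  exact (measureReal_mono hmany).trans hchernoff

open MeasureTheory ProbabilityTheory Finset in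
/-- Probabilistic core of Theorem 1: exponential concentration of an estimator `μ*`
around `μ` from weakly concentrated independent estimators `μ₁,…,μ_m`. -/
theorem median_of_means_concentration
    {M : Type*} [MetricSpace M] [MeasurableSpace M] [BorelSpace M]
    {Ω : Type*} [MeasureSpace Ω] [IsProbabilityMeasure (ℙ : Measure Ω)]
    (m : ℕ) (μs : Fin m → Ω → M) (hmeas : ∀ j, Measurable (μs j))
    (hindep : ProbabilityTheory.iIndepFun μs ℙ)
    (μ : M) (μstar : Ω → M) (hmeasstar : Measurable μstar)
    (α : ℝ) (hα : α ∈ Set.Ioo (0 : ℝ) 1) (C ε : ℝ) (hC : 0 < C) (hε : 0 < ε)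
    (himp : ∀ x : Ω, C * ε < dist (μstar x) μ →
      α * m ≤ (({j | ε ≤ dist (μs j x) μ} : Finset (Fin m)).card : ℝ))
    (η : ℝ) (hη : 0 < η) (hηα : η < α)
    (hconc : ∀ j, ℙ {x | ε ≤ dist (μs j x) μ} ≤ ENNReal.ofReal η) :
    ℙ {x | C * ε < dist (μstar x) μ} ≤
      ENNReal.ofReal (Real.exp (-(m : ℝ) *
        ((1 - α) * Real.log ((1 - α) / (1 - η)) + α * Real.log (α / η)))) :=
  median_of_means_concentration_general m μs hmeas hindep μ μstar α hα C ε himp η hη hηα hconc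
end

section
/- Let p, q₁, q₂ be unit vectors in ℝ^{d+1} with 0 < ⟨p,q₁⟩ < 1 and 0 < ⟨p,q₂⟩ < 1 (i.e. q₁, q₂ lie in the open geodesic ball B(p, π/2) on the unit sphere S^d and differ from p). Then ‖log_p q₁ − log_p q₂‖ ≤ 2·arccos⟨q₁,q₂⟩, i.e. the spherical logarithm map log_p is 2-Lipschitz from B(p, π/2) to the tangent space T_p S^d. -/
/-!
Write `qᵢ = cos αᵢ • p + wᵢ` with `wᵢ ⊥ p`, `‖wᵢ‖ = sin αᵢ`, so that
`log_p qᵢ = (αᵢ / sin αᵢ) • wᵢ`, and put `k = ⟪w₁, w₂⟫ ≤ sin α₁ sin α₂`. Then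
`‖log_p q₁ - log_p q₂‖² = (α₁ - α₂)² + 2 (α₁ / sin α₁) (α₂ / sin α₂) (sin α₁ sin α₂ - k)` and
`1 - ⟪q₁, q₂⟫ = (1 - cos (α₁ - α₂)) + (sin α₁ sin α₂ - k)`.
On the hemisphere `α / sin α ≤ π / 2`, and `x² ≤ π² / 2 · (1 - cos x)` for `|x| ≤ π`, so the first
quantity is at most `π² / 2 · (1 - cos δ) ≤ (π / 2 · δ)²`, where `δ = arccos ⟪q₁, q₂⟫`.
-/

open Real
open scoped RealInnerProductSpace

lemma Real.div_sin_le_pi_div_two {x : ℝ} (hx₀ : 0 < x) (hx : x ≤ π / 2) : x / sin x ≤ π / 2 := by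
  have hsin := mul_le_sin hx₀.le hx
  rw [div_le_iff₀ (lt_of_lt_of_le (by positivity) hsin)]
  calc x = π / 2 * (2 / π * x) := by field_simp
    _ ≤ π / 2 * sin x := by gcongr

lemma Real.sq_le_pi_sq_div_two_mul_one_sub_cos {x : ℝ} (hx : |x| ≤ π) :
    x ^ 2 ≤ π ^ 2 / 2 * (1 - cos x) := by
  have := cos_le_one_sub_mul_cos_sq hx
  calc x ^ 2 = π ^ 2 / 2 * (2 / π ^ 2 * x ^ 2) := by field_simp
    _ ≤ π ^ 2 / 2 * (1 - cos x) := by gcongr; linarith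

lemma Real.sq_sub_add_mul_div_sin_le {α₁ α₂ m : ℝ} (h₁ : 0 < α₁) (h₁' : α₁ ≤ π / 2)
    (h₂ : 0 < α₂) (h₂' : α₂ ≤ π / 2) (hm : 0 ≤ m) :
    (α₁ - α₂) ^ 2 + 2 * (α₁ / sin α₁) * (α₂ / sin α₂) * m
      ≤ π ^ 2 / 2 * ((1 - cos (α₁ - α₂)) + m) := by
  have h_gap := sq_le_pi_sq_div_two_mul_one_sub_cos (x := α₁ - α₂)
    (abs_le.2 ⟨by linarith, by linarith⟩)
  have h_ratio : α₁ / sin α₁ * (α₂ / sin α₂) ≤ π / 2 * (π / 2) :=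
    mul_le_mul (div_sin_le_pi_div_two h₁ h₁') (div_sin_le_pi_div_two h₂ h₂')
      (div_nonneg h₂.le (sin_nonneg_of_nonneg_of_le_pi h₂.le (by linarith [pi_pos])))
      (by positivity)
  nlinarith

section SphereLog

variable {E : Type*} [NormedAddCommGroup E] [InnerProductSpace ℝ E]

noncomputable def sphereLog (p q : E) : E :=
  (arccos ⟪p, q⟫ / √(1 - ⟪p, q⟫ ^ 2)) • (q - ⟪p, q⟫ • p)

lemma one_sub_inner_le_arccos_sq_div_two {x y : E} (hx : ‖x‖ = 1) (hy : ‖y‖ = 1) :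
    1 - ⟪x, y⟫ ≤ arccos ⟪x, y⟫ ^ 2 / 2 := by
  have h := abs_real_inner_le_norm x y
  rw [hx, hy, mul_one, abs_le] at h
  linarith [one_sub_sq_div_two_le_cos (x := arccos ⟪x, y⟫), cos_arccos h.1 h.2]

variable {p : E}

lemma norm_sub_inner_smul_sq (hp : ‖p‖ = 1) (q : E) :
    ‖q - ⟪p, q⟫ • p‖ ^ 2 = ‖q‖ ^ 2 - ⟪p, q⟫ ^ 2 := by
  rw [norm_sub_sq_real, real_inner_smul_right, real_inner_comm, norm_smul, hp, norm_eq_abs,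
    mul_one, sq_abs]
  ring

lemma inner_sub_inner_smul (hp : ‖p‖ = 1) (q₁ q₂ : E) :
    ⟪q₁ - ⟪p, q₁⟫ • p, q₂ - ⟪p, q₂⟫ • p⟫ = ⟪q₁, q₂⟫ - ⟪p, q₁⟫ * ⟪p, q₂⟫ := by
  simp only [inner_sub_left, inner_sub_right, real_inner_smul_left, real_inner_smul_right,
    real_inner_self_eq_norm_sq, hp, real_inner_comm p]
  ring

lemma norm_sub_inner_smul_eq_sin_arccos (hp : ‖p‖ = 1) {q : E} (hq : ‖q‖ = 1) :
    ‖q - ⟪p, q⟫ • p‖ = sin (arccos ⟪p, q⟫) := by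
  rw [sin_arccos, ← sqrt_sq (norm_nonneg (q - _)), norm_sub_inner_smul_sq hp, hq, one_pow]

lemma sphereLog_eq_div_sin (q : E) :
    sphereLog p q = (arccos ⟪p, q⟫ / sin (arccos ⟪p, q⟫)) • (q - ⟪p, q⟫ • p) := by
  rw [sphereLog, sin_arccos]

theorem norm_sphereLog_sub_sphereLog_le (hp : ‖p‖ = 1) {q₁ q₂ : E} (hq₁ : ‖q₁‖ = 1)
    (hq₂ : ‖q₂‖ = 1) (h₁ : 0 ≤ ⟪p, q₁⟫) (h₁' : ⟪p, q₁⟫ < 1) (h₂ : 0 ≤ ⟪p, q₂⟫)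
    (h₂' : ⟪p, q₂⟫ < 1) :
    ‖sphereLog p q₁ - sphereLog p q₂‖ ≤ π / 2 * arccos ⟪q₁, q₂⟫ := by
  set α₁ := arccos ⟪p, q₁⟫ with hα₁
  set α₂ := arccos ⟪p, q₂⟫ with hα₂
  set w₁ := q₁ - ⟪p, q₁⟫ • p
  set w₂ := q₂ - ⟪p, q₂⟫ • p
  set δ := arccos ⟪q₁, q₂⟫
  have hα₁_pos : 0 < α₁ := arccos_pos.2 h₁'
  have hα₂_pos : 0 < α₂ := arccos_pos.2 h₂'
  have hα₁_le : α₁ ≤ π / 2 := arccos_le_pi_div_two.2 h₁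
  have hα₂_le : α₂ ≤ π / 2 := arccos_le_pi_div_two.2 h₂
  have hs₁ : 0 < sin α₁ := sin_pos_of_pos_of_lt_pi hα₁_pos (by linarith [pi_pos])
  have hs₂ : 0 < sin α₂ := sin_pos_of_pos_of_lt_pi hα₂_pos (by linarith [pi_pos])
  have hw₁ : ‖w₁‖ = sin α₁ := norm_sub_inner_smul_eq_sin_arccos hp hq₁
  have hw₂ : ‖w₂‖ = sin α₂ := norm_sub_inner_smul_eq_sin_arccos hp hq₂
  have hk : ⟪w₁, w₂⟫ ≤ sin α₁ * sin α₂ := hw₁ ▸ hw₂ ▸ real_inner_le_norm w₁ w₂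
  have h_dist : 1 - ⟪q₁, q₂⟫ = (1 - cos (α₁ - α₂)) + (sin α₁ * sin α₂ - ⟪w₁, w₂⟫) := by
    rw [inner_sub_inner_smul hp, cos_sub, hα₁, hα₂, cos_arccos (by linarith) h₁'.le,
      cos_arccos (by linarith) h₂'.le]
    ring
  have h_log : ‖sphereLog p q₁ - sphereLog p q₂‖ ^ 2 = (α₁ - α₂) ^ 2
      + 2 * (α₁ / sin α₁) * (α₂ / sin α₂) * (sin α₁ * sin α₂ - ⟪w₁, w₂⟫) := by
    have : sphereLog p q₁ - sphereLog p q₂ = (α₁ / sin α₁) • w₁ - (α₂ / sin α₂) • w₂ := by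
      rw [sphereLog_eq_div_sin, sphereLog_eq_div_sin]
    rw [this, norm_sub_sq_real, norm_smul, norm_smul,
      real_inner_smul_left, real_inner_smul_right, hw₁, hw₂, norm_of_nonneg (by positivity),
      norm_of_nonneg (by positivity)]
    field_simp
    ring
  have h_sq : ‖sphereLog p q₁ - sphereLog p q₂‖ ^ 2 ≤ (π / 2 * δ) ^ 2 :=
    calc _ ≤ π ^ 2 / 2 * (1 - ⟪q₁, q₂⟫) := h_log ▸ h_dist ▸
          sq_sub_add_mul_div_sin_le hα₁_pos hα₁_le hα₂_pos hα₂_le (sub_nonneg.2 hk)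
      _ ≤ π ^ 2 / 2 * (δ ^ 2 / 2) := by gcongr; exact one_sub_inner_le_arccos_sq_div_two hq₁ hq₂
      _ = (π / 2 * δ) ^ 2 := by ring
  exact (pow_le_pow_iff_left₀ (norm_nonneg _)
    (mul_nonneg (by positivity) (arccos_nonneg _)) two_ne_zero).1 h_sq

end SphereLog

open Real in
/-- Proposition 1: the spherical logarithm map `log_p` is 2-Lipschitz from the open
geodesic ball `B(p, π/2)` on `S^d` to the tangent space `T_p S^d`. -/
theorem sphere_log_two_lipschitz
    (d : ℕ) (p q₁ q₂ : EuclideanSpace ℝ (Fin (d + 1)))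
    (hp : ‖p‖ = 1) (hq₁ : ‖q₁‖ = 1) (hq₂ : ‖q₂‖ = 1)
    (h₁ : ⟪p, q₁⟫ ∈ Set.Ioo (0 : ℝ) 1) (h₂ : ⟪p, q₂⟫ ∈ Set.Ioo (0 : ℝ) 1) :
    ‖(Real.arccos ⟪p, q₁⟫ / Real.sqrt (1 - ⟪p, q₁⟫ ^ 2)) • (q₁ - ⟪p, q₁⟫ • p)
      - (Real.arccos ⟪p, q₂⟫ / Real.sqrt (1 - ⟪p, q₂⟫ ^ 2)) • (q₂ - ⟪p, q₂⟫ • p)‖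
      ≤ 2 * Real.arccos ⟪q₁, q₂⟫ :=
  calc _ ≤ π / 2 * arccos ⟪q₁, q₂⟫ :=
        norm_sphereLog_sub_sphereLog_le hp hq₁ hq₂ h₁.1.le h₁.2 h₂.1.le h₂.2
    _ ≤ 2 * arccos ⟪q₁, q₂⟫ :=
        mul_le_mul_of_nonneg_right (by linarith [pi_le_four]) (arccos_nonneg _)
end

section
/- For all a, b ∈ [0, π/2) and all φ ∈ [0, π], one has −1 ≤ cos a·cos b + sin a·sin b·cos φ ≤ 1 and a² + b² − 2ab·cos φ ≤ (2·arccos(cos a·cos b + sin a·sin b·cos φ))². -/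
/-!
Write `E = cos a cos b + sin a sin b cos φ`. The two sides expand as
`a² + b² - 2ab cos φ = (a - b)² + 2ab (1 - cos φ)` and
`1 - E = (1 - cos (a - b)) + sin a sin b (1 - cos φ)`,
and Jordan's inequality `x ≤ (π / 2) sin x` on `[0, π / 2]` compares them term by term,
so that `a² + b² - 2ab cos φ ≤ π² / 2 · (1 - E)`. Writing `E = cos c` with `c = arccos E`,
`1 - cos c ≤ c² / 2` turns this into `a² + b² - 2ab cos φ ≤ (π c / 2)² ≤ (2 c)²`.
-/

namespace Real

lemma sq_le_pi_sq_div_two_mul_one_sub_cos_s7 {x : ℝ} (hx : |x| ≤ π) :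
    x ^ 2 ≤ π ^ 2 / 2 * (1 - cos x) := by
  have hjordan : 2 / π * |x / 2| ≤ |sin (x / 2)| :=
    mul_abs_le_abs_sin (by rw [abs_div, abs_two]; linarith)
  have hhalf : 1 - cos x = 2 * sin (x / 2) ^ 2 := by
    rw [sin_sq_eq_half_sub, mul_div_cancel₀ x two_ne_zero]; ring
  have hsq : (2 / π * |x / 2|) ^ 2 ≤ |sin (x / 2)| ^ 2 :=
    pow_le_pow_left₀ (by positivity) hjordan 2
  rw [mul_pow, sq_abs, sq_abs, div_pow] at hsq
  rw [hhalf]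
  have hπ : 0 < π ^ 2 := by positivity
  field_simp at hsq ⊢
  linarith

lemma mul_le_pi_sq_div_four_mul_sin_mul_sin {a b : ℝ} (ha₀ : 0 ≤ a) (ha₁ : a ≤ π / 2)
    (hb₀ : 0 ≤ b) (hb₁ : b ≤ π / 2) : a * b ≤ π ^ 2 / 4 * (sin a * sin b) := by
  have hsa := mul_le_sin ha₀ ha₁
  calc a * b = π ^ 2 / 4 * (2 / π * a * (2 / π * b)) := by field_simp; ring
    _ ≤ π ^ 2 / 4 * (sin a * sin b) := by
      gcongr
      · exact (mul_nonneg (by positivity) ha₀).trans hsa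
      · exact mul_le_sin hb₀ hb₁

lemma one_sub_cos_mul_cos_add_sin_mul_sin_mul_cos (a b φ : ℝ) :
    1 - (cos a * cos b + sin a * sin b * cos φ) =
      (1 - cos (a - b)) + sin a * sin b * (1 - cos φ) := by
  rw [cos_sub]; ring

lemma cos_mul_cos_add_sin_mul_sin_mul_cos_mem_Icc {a b : ℝ} (φ : ℝ) (h : 0 ≤ sin a * sin b) :
    cos a * cos b + sin a * sin b * cos φ ∈ Set.Icc (-1) 1 := by
  constructor
  · nlinarith [cos_add a b, neg_one_le_cos (a + b), neg_one_le_cos φ]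
  · nlinarith [cos_sub a b, cos_le_one (a - b), cos_le_one φ]

lemma sq_add_sq_sub_two_mul_mul_cos_le {a b : ℝ} (φ : ℝ) (ha₀ : 0 ≤ a) (ha₁ : a ≤ π / 2)
    (hb₀ : 0 ≤ b) (hb₁ : b ≤ π / 2) :
    a ^ 2 + b ^ 2 - 2 * a * b * cos φ ≤
      π ^ 2 / 2 * (1 - (cos a * cos b + sin a * sin b * cos φ)) := by
  have hdiff := sq_le_pi_sq_div_two_mul_one_sub_cos_s7 (x := a - b)
    (abs_sub_le_iff.mpr ⟨by linarith [pi_pos], by linarith [pi_pos]⟩)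
  have hprod := mul_le_pi_sq_div_four_mul_sin_mul_sin ha₀ ha₁ hb₀ hb₁
  have hφ : 0 ≤ 1 - cos φ := sub_nonneg.mpr (cos_le_one φ)
  rw [one_sub_cos_mul_cos_add_sin_mul_sin_mul_cos]
  nlinarith [mul_le_mul_of_nonneg_right hprod hφ]

lemma one_sub_le_arccos_sq_div_two {x : ℝ} (h₁ : -1 ≤ x) (h₂ : x ≤ 1) :
    1 - x ≤ arccos x ^ 2 / 2 := by
  have h := one_sub_sq_div_two_le_cos (x := arccos x)
  rw [cos_arccos h₁ h₂] at h
  linarith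

end Real

open Real in
theorem sphere_log_scalar_inequality_general
    (a b φ : ℝ) (ha : a ∈ Set.Ico (0 : ℝ) (π / 2)) (hb : b ∈ Set.Ico (0 : ℝ) (π / 2)) :
    (-1 ≤ Real.cos a * Real.cos b + Real.sin a * Real.sin b * Real.cos φ ∧
      Real.cos a * Real.cos b + Real.sin a * Real.sin b * Real.cos φ ≤ 1) ∧
    a ^ 2 + b ^ 2 - 2 * a * b * Real.cos φ ≤
      (2 * Real.arccos (Real.cos a * Real.cos b + Real.sin a * Real.sin b * Real.cos φ)) ^ 2 := by
  obtain ⟨ha₀, ha₁⟩ := ha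
  obtain ⟨hb₀, hb₁⟩ := hb
  have hE := cos_mul_cos_add_sin_mul_sin_mul_cos_mem_Icc φ <|
    mul_nonneg (sin_nonneg_of_nonneg_of_le_pi ha₀ (by linarith [pi_pos]))
      (sin_nonneg_of_nonneg_of_le_pi hb₀ (by linarith [pi_pos]))
  refine ⟨hE, ?_⟩
  set c := arccos (cos a * cos b + sin a * sin b * cos φ)
  calc a ^ 2 + b ^ 2 - 2 * a * b * cos φ
      ≤ π ^ 2 / 2 * (1 - (cos a * cos b + sin a * sin b * cos φ)) :=
        sq_add_sq_sub_two_mul_mul_cos_le φ ha₀ ha₁.le hb₀ hb₁.le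
    _ ≤ π ^ 2 / 2 * (c ^ 2 / 2) := by gcongr; exact one_sub_le_arccos_sq_div_two hE.1 hE.2
    _ = (π / 2 * c) ^ 2 := by ring
    _ ≤ (2 * c) ^ 2 := by
        have hc : 0 ≤ c := arccos_nonneg _
        gcongr
        linarith [pi_le_four]

open Real in
/-- Scalar trigonometric inequality underlying Proposition 1 (2-Lipschitzness of the
spherical log map). -/
theorem sphere_log_scalar_inequality
    (a b φ : ℝ) (ha : a ∈ Set.Ico (0 : ℝ) (π / 2)) (hb : b ∈ Set.Ico (0 : ℝ) (π / 2))
    (hφ : φ ∈ Set.Icc (0 : ℝ) π) :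
    (-1 ≤ Real.cos a * Real.cos b + Real.sin a * Real.sin b * Real.cos φ ∧
      Real.cos a * Real.cos b + Real.sin a * Real.sin b * Real.cos φ ≤ 1) ∧
    a ^ 2 + b ^ 2 - 2 * a * b * Real.cos φ ≤
      (2 * Real.arccos (Real.cos a * Real.cos b + Real.sin a * Real.sin b * Real.cos φ)) ^ 2 :=
  sphere_log_scalar_inequality_general a b φ ha hb
end

section
/- For all a, b ∈ [0, π/4) and all φ ∈ [0, π], one has 0 ≤ (cos a·cos b + sin a·sin b·cos φ)² + sin²a·sin²b·sin²φ ≤ 1 and a² + b² − 2ab·cos φ ≤ (2·arccos√((cos a·cos b + sin a·sin b·cos φ)² + sin²a·sin²b·sin²φ))². -/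
/-!
Doubling the angles turns the claim into spherical geometry: the quantity under the square
root equals `(1 + D) / 2`, where `D = cos 2a cos 2b + sin 2a sin 2b cos φ` is, by the spherical
law of cosines, the cosine of the distance `d` between two points of the unit sphere at
colatitudes `2a`, `2b` with azimuths `φ` apart. Hence the right-hand side is `d ^ 2`, which
dominates the squared chord `2 - 2 D`. The left-hand side and `2 - 2 D` are both affine in
`cos φ`, so it suffices to compare them at `cos φ = ±1`, where the comparison reads
`y ^ 2 ≤ 4 sin² y` for `y = a ∓ b`; this is Jordan's inequality `2 |y| / π ≤ |sin y|`.
-/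

open Real

/-- Cosine of the spherical distance between points at colatitudes `α`, `β` whose azimuths
differ by an angle of cosine `t`. -/
noncomputable abbrev sphericalCos (α β t : ℝ) : ℝ := cos α * cos β + sin α * sin β * t

theorem add_mul_le_add_mul_of_abs_le_one {p q r s t : ℝ} (ht : |t| ≤ 1)
    (h₁ : p + q ≤ r + s) (h₂ : p - q ≤ r - s) : p + q * t ≤ r + s * t := by
  obtain ⟨ht₁, ht₂⟩ := abs_le.mp ht
  nlinarith [mul_nonneg (by linarith : 0 ≤ 1 + t) (by linarith : 0 ≤ r + s - (p + q)),
    mul_nonneg (by linarith : 0 ≤ 1 - t) (by linarith : 0 ≤ r - s - (p - q))]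

theorem abs_sphericalCos_le_one (α β : ℝ) {t : ℝ} (ht : |t| ≤ 1) :
    |sphericalCos α β t| ≤ 1 := by
  have hsub : -1 ≤ cos (α - β) ∧ cos (α - β) ≤ 1 := ⟨neg_one_le_cos _, cos_le_one _⟩
  have hadd : -1 ≤ cos (α + β) ∧ cos (α + β) ≤ 1 := ⟨neg_one_le_cos _, cos_le_one _⟩
  rw [cos_sub] at hsub
  rw [cos_add] at hadd
  refine abs_le.mpr ⟨?_, ?_⟩
  · simpa using add_mul_le_add_mul_of_abs_le_one (p := -1) (q := 0) ht
      (by linarith) (by linarith)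
  · simpa using add_mul_le_add_mul_of_abs_le_one (r := 1) (s := 0) ht
      (by linarith) (by linarith)

theorem sphericalCos_sq_add_sin_sq_mul_sin_sq_mul_sin_sq (a b φ : ℝ) :
    sphericalCos a b (cos φ) ^ 2 + sin a ^ 2 * sin b ^ 2 * sin φ ^ 2 =
      (1 + sphericalCos (2 * a) (2 * b) (cos φ)) / 2 := by
  unfold sphericalCos
  rw [sin_sq φ, cos_two_mul, cos_two_mul, sin_two_mul, sin_two_mul]
  linear_combination sin b ^ 2 * sin_sq_add_cos_sq a + (1 - cos a ^ 2) * sin_sq_add_cos_sq b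

theorem sq_le_two_sub_two_mul_cos_two_mul {y : ℝ} (hy : |y| ≤ π / 2) :
    y ^ 2 ≤ 2 - 2 * cos (2 * y) := by
  have hπ : 1 / 2 ≤ 2 / π := by
    rw [div_le_div_iff₀ two_pos pi_pos]
    linarith [pi_le_four]
  have h : |y| ≤ 2 * |sin y| := by nlinarith [mul_abs_le_abs_sin hy, abs_nonneg y]
  calc y ^ 2 = |y| ^ 2 := (sq_abs y).symm
    _ ≤ (2 * |sin y|) ^ 2 := pow_le_pow_left₀ (abs_nonneg y) h 2
    _ = 2 - 2 * cos (2 * y) := by rw [mul_pow, sq_abs, sin_sq_eq_half_sub]; ring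

theorem sq_add_sq_sub_two_mul_mul_le_two_sub_two_mul_sphericalCos {a b t : ℝ}
    (hab : |a| + |b| ≤ π / 2) (ht : |t| ≤ 1) :
    a ^ 2 + b ^ 2 - 2 * a * b * t ≤ 2 - 2 * sphericalCos (2 * a) (2 * b) t := by
  have hsub := sq_le_two_sub_two_mul_cos_two_mul ((abs_sub a b).trans hab)
  have hadd := sq_le_two_sub_two_mul_cos_two_mul ((abs_add_le a b).trans hab)
  rw [mul_sub, cos_sub] at hsub
  rw [mul_add, cos_add] at hadd
  have := add_mul_le_add_mul_of_abs_le_one (p := a ^ 2 + b ^ 2) (q := -2 * a * b)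
    (r := 2 - 2 * (cos (2 * a) * cos (2 * b))) (s := -2 * (sin (2 * a) * sin (2 * b))) ht
    (by linarith) (by linarith)
  linarith

theorem arccos_sqrt_one_add_div_two {x : ℝ} (hx₁ : -1 ≤ x) (hx₂ : x ≤ 1) :
    arccos √((1 + x) / 2) = arccos x / 2 := by
  have h := cos_half (by linarith [arccos_nonneg x, pi_pos]) (arccos_le_pi x)
  rw [cos_arccos hx₁ hx₂] at h
  rw [← h, arccos_cos (by linarith [arccos_nonneg x, pi_pos])
    (by linarith [arccos_le_pi x, pi_pos])]

theorem two_sub_two_mul_le_sq_arccos {x : ℝ} (hx₁ : -1 ≤ x) (hx₂ : x ≤ 1) :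
    2 - 2 * x ≤ arccos x ^ 2 := by
  have := one_sub_sq_div_two_le_cos (x := arccos x)
  rw [cos_arccos hx₁ hx₂] at this
  linarith

open Real in
theorem shape_space_log_scalar_inequality_general
    (a b φ : ℝ) (ha : a ∈ Set.Ico (0 : ℝ) (π / 4)) (hb : b ∈ Set.Ico (0 : ℝ) (π / 4)) :
    (0 ≤ (Real.cos a * Real.cos b + Real.sin a * Real.sin b * Real.cos φ) ^ 2
        + Real.sin a ^ 2 * Real.sin b ^ 2 * Real.sin φ ^ 2 ∧
      (Real.cos a * Real.cos b + Real.sin a * Real.sin b * Real.cos φ) ^ 2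
        + Real.sin a ^ 2 * Real.sin b ^ 2 * Real.sin φ ^ 2 ≤ 1) ∧
    a ^ 2 + b ^ 2 - 2 * a * b * Real.cos φ ≤
      (2 * Real.arccos (Real.sqrt
        ((Real.cos a * Real.cos b + Real.sin a * Real.sin b * Real.cos φ) ^ 2
          + Real.sin a ^ 2 * Real.sin b ^ 2 * Real.sin φ ^ 2))) ^ 2 := by
  have hab : |a| + |b| ≤ π / 2 := by
    rw [abs_of_nonneg ha.1, abs_of_nonneg hb.1]
    linarith [ha.2, hb.2]
  obtain ⟨hD₁, hD₂⟩ :=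
    abs_le.mp (abs_sphericalCos_le_one (2 * a) (2 * b) (abs_cos_le_one φ))
  rw [sphericalCos_sq_add_sin_sq_mul_sin_sq_mul_sin_sq, arccos_sqrt_one_add_div_two hD₁ hD₂]
  refine ⟨⟨by linarith, by linarith⟩, ?_⟩
  calc a ^ 2 + b ^ 2 - 2 * a * b * cos φ
      ≤ 2 - 2 * sphericalCos (2 * a) (2 * b) (cos φ) :=
        sq_add_sq_sub_two_mul_mul_le_two_sub_two_mul_sphericalCos hab (abs_cos_le_one φ)
    _ ≤ arccos (sphericalCos (2 * a) (2 * b) (cos φ)) ^ 2 :=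
        two_sub_two_mul_le_sq_arccos hD₁ hD₂
    _ = _ := by ring

open Real in
/-- Scalar trigonometric inequality underlying Proposition 2 (2-Lipschitzness of the
planar-shape-space log map). -/
theorem shape_space_log_scalar_inequality
    (a b φ : ℝ) (ha : a ∈ Set.Ico (0 : ℝ) (π / 4)) (hb : b ∈ Set.Ico (0 : ℝ) (π / 4))
    (hφ : φ ∈ Set.Icc (0 : ℝ) π) :
    (0 ≤ (Real.cos a * Real.cos b + Real.sin a * Real.sin b * Real.cos φ) ^ 2
        + Real.sin a ^ 2 * Real.sin b ^ 2 * Real.sin φ ^ 2 ∧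
      (Real.cos a * Real.cos b + Real.sin a * Real.sin b * Real.cos φ) ^ 2
        + Real.sin a ^ 2 * Real.sin b ^ 2 * Real.sin φ ^ 2 ≤ 1) ∧
    a ^ 2 + b ^ 2 - 2 * a * b * Real.cos φ ≤
      (2 * Real.arccos (Real.sqrt
        ((Real.cos a * Real.cos b + Real.sin a * Real.sin b * Real.cos φ) ^ 2
          + Real.sin a ^ 2 * Real.sin b ^ 2 * Real.sin φ ^ 2))) ^ 2 :=
  shape_space_log_scalar_inequality_general a b φ ha hb
end

section
/- Let a, q₁, q₂ be real symmetric positive definite n×n matrices, and define d(x,y) := ‖log(x^{−1/2}·y·x^{−1/2})‖_F for symmetric positive definite x, y. Then d(a^{−1/2}·q₁·a^{−1/2}, a^{−1/2}·q₂·a^{−1/2}) = d(q₁,q₂). -/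
open Matrix
open scoped Classical

/-- The unique symmetric positive definite square root of a positive definite matrix
(junk value `0` if none exists). -/
noncomputable def matSqrt {n : ℕ} (x : Matrix (Fin n) (Fin n) ℝ) : Matrix (Fin n) (Fin n) ℝ :=
  if h : ∃ s : Matrix (Fin n) (Fin n) ℝ, s.PosDef ∧ s * s = x then h.choose else 0

/-- The unique symmetric matrix logarithm of a positive definite matrix
(junk value `0` if none exists). -/
noncomputable def matLog {n : ℕ} (x : Matrix (Fin n) (Fin n) ℝ) : Matrix (Fin n) (Fin n) ℝ :=
  if h : ∃ L : Matrix (Fin n) (Fin n) ℝ, L.IsSymm ∧ NormedSpace.exp L = x then h.choose else 0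

/-- The Frobenius norm `‖X‖_F = √(trace(XᵀX))`. -/
noncomputable def fNorm {n : ℕ} (X : Matrix (Fin n) (Fin n) ℝ) : ℝ :=
  Real.sqrt (Matrix.trace (Xᵀ * X))

/-- The Fisher–Rao norm at base point `a`, `‖X‖_a = √(trace(a⁻¹Xa⁻¹X))`. -/
noncomputable def aNorm {n : ℕ} (a X : Matrix (Fin n) (Fin n) ℝ) : ℝ :=
  Real.sqrt (Matrix.trace (a⁻¹ * X * a⁻¹ * X))

/-- The Riemannian log map of the Fisher–Rao metric,
`log_a q = a^{1/2}·log(a^{−1/2}·q·a^{−1/2})·a^{1/2}`. -/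
noncomputable def riemLog {n : ℕ} (a q : Matrix (Fin n) (Fin n) ℝ) : Matrix (Fin n) (Fin n) ℝ :=
  matSqrt a * matLog ((matSqrt a)⁻¹ * q * (matSqrt a)⁻¹) * matSqrt a

/-- The Fisher–Rao geodesic distance `d(x,y) = ‖log(x^{−1/2}·y·x^{−1/2})‖_F` on `PD(n)`. -/
noncomputable def frDist {n : ℕ} (x y : Matrix (Fin n) (Fin n) ℝ) : ℝ :=
  fNorm (matLog ((matSqrt x)⁻¹ * y * (matSqrt x)⁻¹))

/-!
For positive definite `x`, the eigenvalues of `x^{-1/2} y x^{-1/2}` are those of `y x⁻¹`, and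
whatever symmetric logarithm `L` of a positive definite `M` is chosen, `trace (Lᵀ L)` is the sum
of the squared logarithms of the eigenvalues of `M`. So `d(x, y)` only depends on the
characteristic polynomial of `y x⁻¹`. A congruence `x ↦ B x Bᵀ` replaces `y x⁻¹` by the similar
matrix `B (y x⁻¹) B⁻¹`.
-/

open scoped MatrixOrder Matrix.Norms.L2Operator
open Polynomial

namespace Matrix

theorem PosDef.transpose_eq {ι : Type*} {M : Matrix ι ι ℝ} (hM : M.PosDef) : Mᵀ = M :=
  (isHermitian_iff_isSymm.mp hM.isHermitian).eq

variable {ι : Type*} [Fintype ι] [DecidableEq ι]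

theorem IsHermitian.trace_cfc_eq_sum_roots_charpoly {M : Matrix ι ι ℝ} (hM : M.IsHermitian)
    (f : ℝ → ℝ) : (cfc f M).trace = (M.charpoly.roots.map f).sum := by
  have hfM : (cfc f M).IsHermitian := cfc_predicate f M
  rw [trace_eq_sum_roots_charpoly_of_splits hfM.splits_charpoly, hM.charpoly_cfc_eq f,
    roots_prod _ _ (Finset.prod_ne_zero_iff.mpr fun i _ => X_sub_C_ne_zero _),
    hM.roots_charpoly_eq_eigenvalues]
  simp

theorem IsSymm.transpose_mul_self_eq_cfc_exp {L : Matrix ι ι ℝ} (hL : L.IsSymm) :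
    Lᵀ * L = cfc (fun r => Real.log r ^ 2) (NormedSpace.exp L) := by
  have hL' : L.IsHermitian := isHermitian_iff_isSymm.mpr hL
  rw [← CFC.real_exp_eq_normedSpace_exp hL', ← cfc_comp' _ _ L (by fun_prop (disch := simp))]
  simp only [Real.log_exp]
  rw [hL.eq, ← sq]
  exact (cfc_pow_id (R := ℝ) L 2 hL').symm

end Matrix

section

variable {n : ℕ}

theorem matSqrt_spec {x : Matrix (Fin n) (Fin n) ℝ} (hx : x.PosDef) :
    (matSqrt x).PosDef ∧ matSqrt x * matSqrt x = x := by
  have hex : ∃ s : Matrix (Fin n) (Fin n) ℝ, s.PosDef ∧ s * s = x :=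
    ⟨CFC.sqrt x, (hx.isStrictlyPositive.sqrt x).posDef,
      CFC.sqrt_mul_sqrt_self x hx.posSemidef.nonneg⟩
  rw [matSqrt, dif_pos hex]
  exact hex.choose_spec

theorem matLog_spec {x : Matrix (Fin n) (Fin n) ℝ} (hx : x.PosDef) :
    (matLog x).IsSymm ∧ NormedSpace.exp (matLog x) = x := by
  have hex : ∃ L : Matrix (Fin n) (Fin n) ℝ, L.IsSymm ∧ NormedSpace.exp L = x :=
    ⟨CFC.log x, isHermitian_iff_isSymm.mp IsSelfAdjoint.log, CFC.exp_log x hx.isStrictlyPositive⟩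
  rw [matLog, dif_pos hex]
  exact hex.choose_spec

theorem fNorm_matLog {x : Matrix (Fin n) (Fin n) ℝ} (hx : x.PosDef) :
    fNorm (matLog x) = √(x.charpoly.roots.map fun r => Real.log r ^ 2).sum := by
  obtain ⟨hsymm, hexp⟩ := matLog_spec hx
  rw [fNorm, hsymm.transpose_mul_self_eq_cfc_exp, hexp,
    hx.isHermitian.trace_cfc_eq_sum_roots_charpoly]

theorem frDist_eq_sqrt_sum_log_sq {x y : Matrix (Fin n) (Fin n) ℝ} (hx : x.PosDef)
    (hy : y.PosDef) :
    frDist x y = √((y * x⁻¹).charpoly.roots.map fun r => Real.log r ^ 2).sum := by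
  obtain ⟨hs, hss⟩ := matSqrt_spec hx
  have hs' : ((matSqrt x)⁻¹).PosDef := hs.inv
  have hconj : ((matSqrt x)⁻¹ * y * (matSqrt x)⁻¹).PosDef := by
    simpa [hs'.transpose_eq] using
      hy.conjTranspose_mul_mul_same (mulVec_injective_of_isUnit hs'.isUnit)
  rw [frDist, fNorm_matLog hconj, Matrix.mul_assoc, charpoly_mul_comm, Matrix.mul_assoc,
    ← Matrix.mul_inv_rev, hss]

theorem frDist_congruence {B x y : Matrix (Fin n) (Fin n) ℝ} (hB : IsUnit B) (hx : x.PosDef)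
    (hy : y.PosDef) : frDist (B * x * Bᵀ) (B * y * Bᵀ) = frDist x y := by
  have hcongr : ∀ {z : Matrix (Fin n) (Fin n) ℝ}, z.PosDef → (B * z * Bᵀ).PosDef := fun hz => by
    simpa using hz.mul_mul_conjTranspose_same (vecMul_injective_of_isUnit hB)
  have hBt : IsUnit Bᵀ := (isUnit_transpose B).mpr hB
  have hsim : B * y * Bᵀ * (B * x * Bᵀ)⁻¹ = B * (y * x⁻¹) * B⁻¹ := by
    simp only [Matrix.mul_inv_rev, Matrix.mul_assoc]
    rw [mul_nonsing_inv_cancel_left Bᵀ _ ((isUnit_iff_isUnit_det _).mp hBt)]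
  rw [frDist_eq_sqrt_sum_log_sq (hcongr hx) (hcongr hy), frDist_eq_sqrt_sum_log_sq hx hy, hsim,
    Matrix.mul_assoc, charpoly_mul_comm, Matrix.mul_assoc,
    nonsing_inv_mul _ ((isUnit_iff_isUnit_det _).mp hB), Matrix.mul_one]

end

/-- Second step of the proof of Proposition 3: invariance of the Fisher–Rao geodesic
distance on `PD(n)` under congruence by `a^{−1/2}`. -/
theorem fisherRao_dist_congruence_invariant
    (n : ℕ) (a q₁ q₂ : Matrix (Fin n) (Fin n) ℝ)
    (ha : a.PosDef) (hq₁ : q₁.PosDef) (hq₂ : q₂.PosDef) :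
    frDist ((matSqrt a)⁻¹ * q₁ * (matSqrt a)⁻¹) ((matSqrt a)⁻¹ * q₂ * (matSqrt a)⁻¹)
      = frDist q₁ q₂ := by
  have hs : ((matSqrt a)⁻¹).PosDef := (matSqrt_spec ha).1.inv
  simpa only [hs.transpose_eq] using frDist_congruence hs.isUnit hq₁ hq₂
end

section
/- Let p₁,…,p_m and ω be unit vectors in ℝ^{d+1}, and let p* be a unit vector satisfying ∑_{j=1}^m arccos⟨p*,p_j⟩ ≤ ∑_{j=1}^m arccos⟨p,p_j⟩ for every unit vector p (p* is an intrinsic geometric median of p₁,…,p_m on the sphere S^d). Assume ⟨p*,p_j⟩ > −1 for all j. Let α ∈ (0,1/2), let C_α := 2(1−α)/√(1−2α), let ε > 0, and assume arccos⟨ω,p*⟩ + ε < π/2. If arccos⟨ω,p*⟩ ≥ C_α·ε, then the number of indices j ∈ {1,…,m} with arccos⟨p_j,ω⟩ ≥ ε is at least α·m. -/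
/-!
Move `p*` along the great circle `γ t = cos t • p* + sin t • u`, where `u` is the unit tangent
at `p*` pointing to `ω`. Minimality of `p*` makes the right derivative at `0` of
`t ↦ ∑ j, arccos ⟪γ t, p j⟫` nonnegative. Its `j`-th term is minus the cosine of the angle at `p*`
between `u` and the direction of `p j`: always at most `1`, and at most `-α / (1 - α)` when
`p j` lies within `ε` of `ω`, because `Cα * ε ≤ d(ω, p*) ≤ 2 sin d(ω, p*)` makes that angle
small. Hence the points far from `ω` carry enough weight to balance the sum, so there are at
least `α * m` of them.
-/

open scoped RealInnerProductSpace

open Real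

lemma IsLocalMinOn.hasDerivWithinAt_Ici_nonneg {f : ℝ → ℝ} {f' a : ℝ}
    (hmin : IsLocalMinOn f (Set.Ici a) a) (hf : HasDerivWithinAt f f' (Set.Ici a) a) :
    0 ≤ f' := by
  have hone : (1 : ℝ) ∈ posTangentConeAt (Set.Ici a) a :=
    mem_posTangentConeAt_of_segment_subset <|
      (segment_subset_Icc (by simp)).trans Set.Icc_subset_Ici_self
  simpa using hmin.hasFDerivWithinAt_nonneg hf.hasFDerivWithinAt hone

lemma card_mul_le_card_of_sum_nonneg {ι : Type*} [Fintype ι] (K : Finset ι) (l : ι → ℝ)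
    {α : ℝ} (hα : α < 1) (hsum : 0 ≤ ∑ j, l j) (hK : ∀ j ∈ K, l j ≤ 1)
    (hKc : ∀ j ∉ K, l j ≤ -(α / (1 - α))) :
    α * Fintype.card ι ≤ K.card := by
  classical
  have h1α : 0 < 1 - α := by linarith
  have hsumK : ∑ j ∈ K, l j ≤ K.card := by
    simpa using Finset.sum_le_sum hK
  have hsumKc : ∑ j ∈ Kᶜ, l j ≤ Kᶜ.card * -(α / (1 - α)) := by
    simpa using Finset.sum_le_sum fun j hj => hKc j (Finset.mem_compl.mp hj)
  have hcard : (K.card : ℝ) + Kᶜ.card = Fintype.card ι := by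
    exact_mod_cast K.card_add_card_compl
  rw [← K.sum_add_sum_compl] at hsum
  have key : 0 ≤ (K.card : ℝ) * (1 - α) - Kᶜ.card * α := by
    have := mul_le_mul_of_nonneg_right (hsum.trans (add_le_add hsumK hsumKc)) h1α.le
    field_simp at this
    linarith
  nlinarith

/-- For orthonormal `p, u` and a unit `x` with `c = ⟪p, x⟫`, `s = ⟪u, x⟫`: minus the cosine of
the angle at `p` between `u` and the geodesic to `x`. At `x = p` the distance to `x` along the
great circle is `|t|`, whose right derivative is `1`. -/
noncomputable def arccosSlope (c s : ℝ) : ℝ :=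
  if c = 1 then 1 else -(s / √(1 - c ^ 2))

lemma hasDerivWithinAt_arccos_cos_mul_add_sin_mul {c s : ℝ} (hc : -1 < c)
    (hcs : c ^ 2 + s ^ 2 ≤ 1) :
    HasDerivWithinAt (fun t => arccos (cos t * c + sin t * s)) (arccosSlope c s)
      (Set.Ici 0) 0 := by
  rw [arccosSlope]
  split_ifs with hc1
  · have hs : s = 0 := by nlinarith [sq_nonneg s]
    subst hc1 hs
    refine (hasDerivWithinAt_id 0 _).congr_of_eventuallyEq ?_ (by simp)
    filter_upwards [Icc_mem_nhdsGE pi_pos] with t ht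
    simpa using arccos_cos ht.1 ht.2
  · have hinner : HasDerivAt (fun t => cos t * c + sin t * s) s 0 := by
      simpa using ((hasDerivAt_cos 0).mul_const c).fun_add ((hasDerivAt_sin 0).mul_const s)
    have harccos : HasDerivAt arccos (-(1 / √(1 - c ^ 2))) (cos 0 * c + sin 0 * s) := by
      simpa using hasDerivAt_arccos hc.ne' hc1
    rw [show -(s / √(1 - c ^ 2)) = -(1 / √(1 - c ^ 2)) * s by ring]
    exact (harccos.comp 0 hinner).hasDerivWithinAt

lemma arccosSlope_le_one {c s : ℝ} (hcs : c ^ 2 + s ^ 2 ≤ 1) : arccosSlope c s ≤ 1 := by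
  rw [arccosSlope]
  split_ifs with hc1
  · rfl
  · rcases eq_or_lt_of_le (show c ^ 2 ≤ 1 by nlinarith) with hc2 | hc2
    · simp [hc2]
    · have hY : 0 < √(1 - c ^ 2) := sqrt_pos.mpr (by linarith)
      rw [neg_le, le_div_iff₀ hY]
      nlinarith [sq_sqrt (show 0 ≤ 1 - c ^ 2 by linarith), sq_nonneg (s + √(1 - c ^ 2))]

lemma arccosSlope_le_neg {a σ c s ε β : ℝ} (haσ : a ^ 2 + σ ^ 2 = 1) (hσ : 0 < σ)
    (hcs : c ^ 2 + s ^ 2 ≤ 1) (hb : 0 ≤ a * c + σ * s)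
    (hbε : 1 - (a * c + σ * s) ^ 2 ≤ ε ^ 2) (hεσ : ε ^ 2 ≤ (1 - β ^ 2) * σ ^ 2) (hβ : 0 < β) :
    arccosSlope c s ≤ -β := by
  set b := a * c + σ * s
  have hc2 : c ^ 2 < 1 := by
    by_contra! hc2
    have hs : s = 0 := by nlinarith [sq_nonneg s]
    have hba : b ^ 2 = a ^ 2 := by
      have hc2' : c ^ 2 = 1 := by nlinarith [sq_nonneg s]
      simp only [b, hs]; nlinarith
    nlinarith [mul_pos (pow_pos hβ 2) (pow_pos hσ 2)]
  have hc1 : c ≠ 1 := by rintro rfl; norm_num at hc2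
  set Y := √(1 - c ^ 2)
  have hY : 0 < Y := sqrt_pos.mpr (by linarith)
  have hY2 : Y ^ 2 = 1 - c ^ 2 := sq_sqrt (by linarith)
  set X := √(b ^ 2 - a ^ 2)
  have hX2 : X ^ 2 = b ^ 2 - a ^ 2 := sq_sqrt (by nlinarith [sq_nonneg β])
  -- Cauchy–Schwarz in `ℝ²` for `(a, X)` and `(c, Y)`, of norms `b` and `1`
  have hCS : a * c + X * Y ≤ b := by
    nlinarith [sq_nonneg (a * Y - X * c), sqrt_nonneg (b ^ 2 - a ^ 2), hY.le]
  have hX : β * σ ≤ X := by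
    rw [le_sqrt (by positivity) (by nlinarith)]
    nlinarith
  have hs : β * Y ≤ s := by
    have : σ * (β * Y) ≤ σ * s := by nlinarith [mul_le_mul_of_nonneg_right hX hY.le]
    exact le_of_mul_le_mul_left this hσ
  rw [arccosSlope, if_neg hc1, neg_le_neg_iff, le_div_iff₀ hY]
  exact hs

lemma one_sub_sq_lt_sq_of_arccos_lt {b ε : ℝ} (h : arccos b < ε) : 1 - b ^ 2 < ε ^ 2 := by
  have hsin : √(1 - b ^ 2) < ε := by
    rw [← sin_arccos]
    exact (sin_le (arccos_nonneg b)).trans_lt h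
  exact (sqrt_lt' ((arccos_nonneg b).trans_lt h)).mp hsin

lemma half_le_sin {x : ℝ} (hx : 0 ≤ x) (hx' : x ≤ π / 2) : x / 2 ≤ sin x := by
  have h := mul_le_sin hx hx'
  have h4 : 2 / 4 * x ≤ 2 / π * x :=
    mul_le_mul_of_nonneg_right (div_le_div_of_nonneg_left zero_le_two pi_pos pi_le_four) hx
  linarith

lemma sq_le_one_sub_sq_mul_sin_sq {α ε D : ℝ} (hα : α < 1 / 2) (hε : 0 ≤ ε)
    (hD : D ≤ π / 2) (hfar : 2 * (1 - α) / √(1 - 2 * α) * ε ≤ D) :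
    ε ^ 2 ≤ (1 - (α / (1 - α)) ^ 2) * sin D ^ 2 := by
  have h1α : 0 < 1 - α := by linarith
  have hr2 : √(1 - 2 * α) ^ 2 = 1 - 2 * α := sq_sqrt (by linarith)
  have hsin : (1 - α) / √(1 - 2 * α) * ε ≤ sin D := by
    refine le_trans ?_ (half_le_sin (le_trans (by positivity) hfar) hD)
    rw [le_div_iff₀ two_pos]
    linarith [show 2 * (1 - α) / √(1 - 2 * α) * ε = (1 - α) / √(1 - 2 * α) * ε * 2 by ring]
  have hsin2 : (1 - α) ^ 2 * ε ^ 2 ≤ (1 - 2 * α) * sin D ^ 2 := by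
    have h := pow_le_pow_left₀ (by positivity) hsin 2
    rw [mul_pow, div_pow, hr2, div_mul_eq_mul_div, div_le_iff₀ (by linarith)] at h
    linarith
  have hβ : 1 - (α / (1 - α)) ^ 2 = (1 - 2 * α) / (1 - α) ^ 2 := by
    field_simp; ring
  rw [hβ, div_mul_eq_mul_div, le_div_iff₀ (by positivity)]
  linarith

section InnerProductSpace

variable {E : Type*} [NormedAddCommGroup E] [InnerProductSpace ℝ E]

lemma exists_unit_orthogonal_eq_inner_smul_add {p ω : E} (hp : ‖p‖ = 1) (hω : ‖ω‖ = 1)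
    (hωp : ⟪ω, p⟫ ^ 2 < 1) :
    ∃ u : E, ‖u‖ = 1 ∧ ⟪p, u⟫ = 0 ∧ ω = ⟪ω, p⟫ • p + √(1 - ⟪ω, p⟫ ^ 2) • u := by
  set a := ⟪ω, p⟫
  set σ := √(1 - a ^ 2)
  have hσ : 0 < σ := sqrt_pos.mpr (by linarith)
  have hnorm : ‖ω - a • p‖ = σ := by
    rw [← sq_eq_sq₀ (norm_nonneg _) hσ.le, norm_sub_sq_real, norm_smul, real_inner_smul_right,
      hω, hp, sq_sqrt (by linarith), Real.norm_eq_abs, mul_one, sq_abs]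
    ring
  refine ⟨σ⁻¹ • (ω - a • p), ?_, ?_, ?_⟩
  · rw [norm_smul, hnorm, norm_inv, norm_of_nonneg hσ.le, inv_mul_cancel₀ hσ.ne']
  · rw [inner_smul_right, inner_sub_right, inner_smul_right, real_inner_comm,
      real_inner_self_eq_norm_sq, hp]
    ring
  · rw [smul_inv_smul₀ hσ.ne', add_sub_cancel]

lemma norm_cos_smul_add_sin_smul {p u : E} (hp : ‖p‖ = 1) (hu : ‖u‖ = 1) (hpu : ⟪p, u⟫ = 0)
    (t : ℝ) : ‖cos t • p + sin t • u‖ = 1 := by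
  have hortho : ⟪cos t • p, sin t • u⟫ = 0 := by
    rw [real_inner_smul_left, real_inner_smul_right, hpu, mul_zero, mul_zero]
  rw [← sq_eq_sq₀ (norm_nonneg _) zero_le_one, norm_add_sq_real, hortho, norm_smul, norm_smul,
    mul_pow, mul_pow, Real.norm_eq_abs, Real.norm_eq_abs, sq_abs, sq_abs, hp, hu]
  linear_combination cos_sq_add_sin_sq t

lemma inner_sq_add_inner_sq_le {p u : E} (hp : ‖p‖ = 1) (hu : ‖u‖ = 1) (hpu : ⟪p, u⟫ = 0)
    (x : E) : ⟪p, x⟫ ^ 2 + ⟪u, x⟫ ^ 2 ≤ ‖x‖ ^ 2 := by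
  have hon : Orthonormal ℝ ![p, u] := by
    rw [orthonormal_iff_ite]
    intro i j
    fin_cases i <;> fin_cases j <;> simp [hp, hu, hpu, real_inner_comm]
  simpa [Fin.sum_univ_two] using hon.sum_inner_products_le (s := Finset.univ) (x := x)

lemma sum_arccosSlope_nonneg {ι : Type*} [Fintype ι] {x : ι → E} (hx : ∀ j, ‖x j‖ = 1)
    {p u : E} (hp : ‖p‖ = 1) (hu : ‖u‖ = 1) (hpu : ⟪p, u⟫ = 0)
    (hmin : ∀ q : E, ‖q‖ = 1 → ∑ j, arccos ⟪p, x j⟫ ≤ ∑ j, arccos ⟪q, x j⟫)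
    (hne : ∀ j, -1 < ⟪p, x j⟫) :
    0 ≤ ∑ j, arccosSlope ⟪p, x j⟫ ⟪u, x j⟫ := by
  have hderiv : HasDerivWithinAt (fun t => ∑ j, arccos ⟪cos t • p + sin t • u, x j⟫)
      (∑ j, arccosSlope ⟪p, x j⟫ ⟪u, x j⟫) (Set.Ici 0) 0 := by
    simp only [inner_add_left, real_inner_smul_left]
    refine HasDerivWithinAt.fun_sum fun j _ =>
      hasDerivWithinAt_arccos_cos_mul_add_sin_mul (hne j) ?_
    simpa [hx j] using inner_sq_add_inner_sq_le hp hu hpu (x j)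
  refine IsLocalMinOn.hasDerivWithinAt_Ici_nonneg (IsMinOn.localize fun t _ => ?_) hderiv
  simpa using hmin _ (norm_cos_smul_add_sin_smul hp hu hpu t)

end InnerProductSpace

open Real Finset in
/-- Lemma 1(b) instantiated on the unit sphere `S^d` with geodesic distance
`d_g(x,y) = arccos⟪x,y⟫`: concentration of points around the intrinsic geometric median. -/
theorem median_of_means_sphere_intrinsic
    (d : ℕ) (m : ℕ) (p : Fin m → EuclideanSpace ℝ (Fin (d + 1)))
    (hp : ∀ j, ‖p j‖ = 1)
    (ω : EuclideanSpace ℝ (Fin (d + 1))) (hω : ‖ω‖ = 1)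
    (pstar : EuclideanSpace ℝ (Fin (d + 1))) (hpstar : ‖pstar‖ = 1)
    (hmed : ∀ q : EuclideanSpace ℝ (Fin (d + 1)), ‖q‖ = 1 →
      ∑ j, Real.arccos ⟪pstar, p j⟫ ≤ ∑ j, Real.arccos ⟪q, p j⟫)
    (hne : ∀ j, -1 < ⟪pstar, p j⟫)
    (α : ℝ) (hα : α ∈ Set.Ioo (0 : ℝ) (1/2))
    (Cα : ℝ) (hCα : Cα = 2 * (1 - α) / Real.sqrt (1 - 2 * α))
    (ε : ℝ) (hε : 0 < ε)
    (hball : Real.arccos ⟪ω, pstar⟫ + ε < π / 2)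
    (hfar : Cα * ε ≤ Real.arccos ⟪ω, pstar⟫) :
    α * m ≤ (({j | ε ≤ Real.arccos ⟪p j, ω⟫} : Finset (Fin m)).card : ℝ) := by
  obtain ⟨hα0, hα2⟩ := hα
  set a := ⟪ω, pstar⟫
  have hCα0 : 0 < Cα := hCα ▸ div_pos (by linarith) (sqrt_pos.mpr (by linarith))
  have ha : 0 < a := arccos_lt_pi_div_two.mp (by linarith)
  have ha1 : a < 1 := arccos_pos.mp ((mul_pos hCα0 hε).trans_le hfar)
  obtain ⟨u, hu, hpu, hωu⟩ := exists_unit_orthogonal_eq_inner_smul_add hpstar hω (by nlinarith)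
  have hεσ := sq_le_one_sub_sq_mul_sin_sq hα2 hε.le (by linarith) (hCα ▸ hfar)
  rw [sin_arccos] at hεσ
  have hcs : ∀ j, ⟪pstar, p j⟫ ^ 2 + ⟪u, p j⟫ ^ 2 ≤ 1 := fun j => by
    simpa [hp j] using inner_sq_add_inner_sq_le hpstar hu hpu (p j)
  have hnear : ∀ j, arccos ⟪p j, ω⟫ < ε →
      arccosSlope ⟪pstar, p j⟫ ⟪u, p j⟫ ≤ -(α / (1 - α)) := fun j hj => by
    rw [real_inner_comm, hωu, inner_add_left, real_inner_smul_left, real_inner_smul_left] at hj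
    exact arccosSlope_le_neg (by rw [sq_sqrt (by nlinarith)]; ring) (sqrt_pos.mpr (by nlinarith))
      (hcs j) (arccos_lt_pi_div_two.mp (by linarith [arccos_nonneg a])).le
      (one_sub_sq_lt_sq_of_arccos_lt hj).le hεσ (div_pos hα0 (by linarith))
  simpa using card_mul_le_card_of_sum_nonneg _ _ (by linarith)
    (sum_arccosSlope_nonneg hp hpstar hu hpu hmed hne) (fun j _ => arccosSlope_le_one (hcs j))
    (fun j hj => hnear j (by simpa using hj))
end
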